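/- arXiv:1805.04039 — 6 statements merged into one kernel-verified Lean document; each statement's English description precedes it below -/
import Mathlib

section
/- Let S be a finite set with |S| = k ≥ 1, and let 0 < r < 1/log(2k). Then the probability that a uniformly random word of length n over the alphabet S ⊔ S⁻¹ (of size 2k) fails to contain some fixed-length subword of length ⌊r·log n⌋ tends to 0 as n → ∞; more precisely, the probability that at least one word of length ⌊r·log n⌋ over the alphabet does not appear as a (contiguous) subword of the random word of length n is at most (2k)^⌊r·log n⌋ · (1 - (2k)^{-⌊r·log n⌋})^⌊n/⌊r·log n⌋⌋, and this bound tends to 0 as n → ∞. -/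
/-!
Cut the random word into `⌊n / L⌋` disjoint consecutive blocks of length `L`. A fixed word `w`
can be missed only if every block differs from `w`, which leaves `((2k)^L - 1)^⌊n/L⌋` choices
for the blocks; a union bound over the `(2k)^L` words `w` gives the stated bound.

For the limit put `a = r log (2k) < 1` and `L = ⌊r log n⌋`. Then `(2k)^L ≤ n^a` and
`⌊n / L⌋ ≥ n / (r log n) - 1`, so with `1 - t ≤ e^{-t}` the bound is at most
`exp (a log n - n^{1-a} / (r log n) + 1)`, which tends to `0` since `n^{1-a}` beats `(log n)^2`.
-/

open Filter Topology Finset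

/-- A word `w` of length `L` appears as a contiguous subword of `v : Fin n → A`. -/
def WordAppears {A : Type} {n L : ℕ} (v : Fin n → A) (w : Fin L → A) : Prop :=
  ∃ i : ℕ, ∃ h : i + L ≤ n, ∀ j : Fin L, v ⟨i + j, by have := j.isLt; omega⟩ = w j

section Counting

def blockEquiv (A : Type) (n L : ℕ) :
    (Fin n → A) ≃ (Fin (n / L) → Fin L → A) × (Fin (n - n / L * L) → A) :=
  ((finCongr (Nat.add_sub_of_le (Nat.div_mul_le_self n L)).symm).trans
      (finSumFinEquiv.symm.trans (finProdFinEquiv.symm.sumCongr (Equiv.refl _)))).arrowCongr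
      (Equiv.refl A) |>.trans <|
    (Equiv.sumArrowEquivProdArrow _ _ _).trans ((Equiv.curry _ _ _).prodCongr (Equiv.refl _))

variable {A : Type}

lemma blockEquiv_fst_apply {n L : ℕ} (v : Fin n → A) (i : Fin (n / L)) (j : Fin L) :
    (blockEquiv A n L v).1 i j =
      v ⟨i * L + j, by nlinarith [i.isLt, j.isLt, Nat.div_mul_le_self n L]⟩ := by
  show v (Fin.cast (Nat.add_sub_of_le (Nat.div_mul_le_self n L))
    (Fin.castAdd _ (finProdFinEquiv (i, j)))) = _
  congr 1
  ext
  simp only [Fin.val_cast, Fin.val_castAdd, finProdFinEquiv_apply_val]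
  ring

lemma wordAppears_blockEquiv_fst {n L : ℕ} (v : Fin n → A) (i : Fin (n / L)) :
    WordAppears v ((blockEquiv A n L v).1 i) :=
  ⟨i * L, by nlinarith [i.isLt, Nat.div_mul_le_self n L],
    fun j => (blockEquiv_fst_apply v i j).symm⟩

variable [Fintype A]

lemma ncard_not_wordAppears_le {n L : ℕ} (w : Fin L → A) :
    {v : Fin n → A | ¬ WordAppears v w}.ncard ≤
      (Fintype.card A ^ L - 1) ^ (n / L) * Fintype.card A ^ (n - n / L * L) := by
  classical
  set blocksAvoiding : Finset (Fin n → A) :=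
    ((Fintype.piFinset fun _ => univ.erase w) ×ˢ univ).map (blockEquiv A n L).symm.toEmbedding
  calc {v : Fin n → A | ¬ WordAppears v w}.ncard
      ≤ (blocksAvoiding : Set (Fin n → A)).ncard := by
        refine Set.ncard_le_ncard (fun v hv => ?_)
        simp only [blocksAvoiding, mem_coe, mem_map_equiv, Equiv.symm_symm, mem_product,
          Fintype.mem_piFinset, mem_erase, ne_eq, mem_univ, and_true]
        exact fun i hi => hv (hi ▸ wordAppears_blockEquiv_fst v i)
    _ = _ := by
        rw [Set.ncard_coe_finset]
        simp [blocksAvoiding, card_erase_of_mem]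

lemma ncard_exists_not_wordAppears_le (n L : ℕ) :
    {v : Fin n → A | ∃ w : Fin L → A, ¬ WordAppears v w}.ncard ≤ Fintype.card A ^ L *
      ((Fintype.card A ^ L - 1) ^ (n / L) * Fintype.card A ^ (n - n / L * L)) := by
  classical
  calc {v : Fin n → A | ∃ w : Fin L → A, ¬ WordAppears v w}.ncard
      = (⋃ w ∈ (univ : Finset (Fin L → A)), {v : Fin n → A | ¬ WordAppears v w}).ncard := by
        congr 1; ext; simp
    _ ≤ ∑ w : Fin L → A, {v : Fin n → A | ¬ WordAppears v w}.ncard := set_ncard_biUnion_le _ _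
    _ ≤ ∑ _w : Fin L → A,
          (Fintype.card A ^ L - 1) ^ (n / L) * Fintype.card A ^ (n - n / L * L) :=
        sum_le_sum fun w _ => ncard_not_wordAppears_le w
    _ = _ := by simp

lemma ncard_exists_not_wordAppears_div_le [Nonempty A] (n L : ℕ) :
    ({v : Fin n → A | ∃ w : Fin L → A, ¬ WordAppears v w}.ncard : ℝ) / Fintype.card A ^ n ≤
      Fintype.card A ^ L * (1 - ((Fintype.card A : ℝ) ^ L)⁻¹) ^ (n / L) := by
  set c : ℝ := (Fintype.card A : ℝ)
  have hc : 0 < c := by simp [c, Fintype.card_pos]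
  have hcL : 1 ≤ Fintype.card A ^ L := Nat.one_le_pow _ _ Fintype.card_pos
  have hcount : ({v : Fin n → A | ∃ w : Fin L → A, ¬ WordAppears v w}.ncard : ℝ) ≤
      c ^ L * ((c ^ L - 1) ^ (n / L) * c ^ (n - n / L * L)) := by
    have := Nat.cast_le (α := ℝ) |>.mpr (ncard_exists_not_wordAppears_le (A := A) n L)
    push_cast [Nat.cast_sub hcL] at this
    exact this
  have hsplit : c ^ n = (c ^ L) ^ (n / L) * c ^ (n - n / L * L) := by
    rw [← pow_mul, ← pow_add, mul_comm L, Nat.add_sub_of_le (Nat.div_mul_le_self n L)]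
  have hfactor : (1 - (c ^ L)⁻¹) ^ (n / L) * (c ^ L) ^ (n / L) = (c ^ L - 1) ^ (n / L) := by
    rw [← mul_pow, sub_mul, inv_mul_cancel₀ (pow_pos hc L).ne', one_mul]
  rw [div_le_iff₀ (pow_pos hc n)]
  calc _ ≤ _ := hcount
    _ = _ := by rw [hsplit, ← hfactor]; ring

end Counting

section Asymptotics

open Real

lemma tendsto_mul_sub_exp_div_atBot (a : ℝ) {b r : ℝ} (hb : 0 < b) (hr : 0 < r) :
    Tendsto (fun y => a * y - exp (b * y) / (r * y)) atTop atBot := by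
  have hfactor : Tendsto (fun y => a + -(r⁻¹ * (exp (b * y) / y ^ (2 : ℝ)))) atTop atBot :=
    tendsto_atBot_add_const_left _ a <| tendsto_neg_atTop_atBot.comp <|
      (tendsto_exp_mul_div_rpow_atTop 2 b hb).const_mul_atTop (inv_pos.mpr hr)
  refine (tendsto_id.atTop_mul_atBot₀ hfactor).congr' ?_
  filter_upwards [eventually_gt_atTop 0] with y hy
  rw [rpow_two, id]
  field_simp
  ring

lemma mul_one_sub_inv_pow_le_exp {x : ℝ} (hx : 1 ≤ x) (M : ℕ) :
    x * (1 - x⁻¹) ^ M ≤ exp (log x - M / x) := by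
  have hx0 : 0 < x := by linarith
  calc x * (1 - x⁻¹) ^ M ≤ x * exp (-x⁻¹) ^ M := by
        gcongr
        · exact sub_nonneg.mpr (inv_le_one_of_one_le₀ hx)
        · exact one_sub_le_exp_neg _
    _ = exp (log x - M / x) := by
        rw [sub_eq_add_neg, exp_add, exp_log hx0, ← exp_nat_mul, div_eq_mul_inv, neg_mul_eq_mul_neg]

lemma pow_floor_le_exp {c y : ℝ} (hc : 1 ≤ c) (hy : 0 ≤ y) : c ^ ⌊y⌋₊ ≤ exp (y * log c) := by
  calc c ^ ⌊y⌋₊ = exp (⌊y⌋₊ * log c) := by rw [← log_pow, exp_log (by positivity)]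
    _ ≤ exp (y * log c) := by
        gcongr
        · exact log_nonneg hc
        · exact Nat.floor_le hy

lemma div_sub_one_le_div_floor {y : ℝ} (hy : 1 ≤ y) (n : ℕ) :
    n / y - 1 ≤ ((n / ⌊y⌋₊ : ℕ) : ℝ) := by
  have hn : n < ⌊y⌋₊ * (n / ⌊y⌋₊ + 1) := Nat.lt_mul_div_succ n (Nat.floor_pos.mpr hy)
  rw [sub_le_iff_le_add, div_le_iff₀ (by linarith)]
  calc (n : ℝ) ≤ ⌊y⌋₊ * ((n / ⌊y⌋₊ : ℕ) + 1 : ℝ) := by exact_mod_cast hn.le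
    _ ≤ _ := by
        rw [mul_comm]
        gcongr
        exact Nat.floor_le (by linarith)

lemma pow_floor_mul_one_sub_inv_pow_le {c r : ℝ} (hc : 1 ≤ c) (hr : 0 < r) {n : ℕ}
    (hn : 1 ≤ r * log n) :
    c ^ ⌊r * log n⌋₊ * (1 - (c ^ ⌊r * log n⌋₊)⁻¹) ^ (n / ⌊r * log n⌋₊) ≤
      exp (r * log c * log n - exp ((1 - r * log c) * log n) / (r * log n) + 1) := by
  set y := log (n : ℝ)
  set a := r * log c with ha_def
  set x := c ^ ⌊r * y⌋₊
  set M := n / ⌊r * y⌋₊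
  have hy : 0 < y := pos_of_mul_pos_right (by linarith) hr.le
  have hn_exp : (n : ℝ) = exp y := by
    refine (exp_log (Nat.cast_pos.mpr (Nat.pos_of_ne_zero ?_))).symm
    rintro rfl
    simp [y] at hy
  have ha : 0 ≤ a := mul_nonneg hr.le (log_nonneg hc)
  have hx : 1 ≤ x := one_le_pow₀ hc
  have hx_le : x ≤ exp (a * y) :=
    (pow_floor_le_exp hc (by positivity)).trans_eq (by rw [ha_def]; ring_nf)
  have hM : exp ((1 - a) * y) / (r * y) - 1 ≤ M / x :=
    calc exp ((1 - a) * y) / (r * y) - 1 ≤ (n / (r * y) - 1) * exp (-(a * y)) := by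
          have hexp : exp (-(a * y)) ≤ 1 := exp_le_one_iff.mpr (by nlinarith)
          have hdistrib : (n / (r * y) - 1) * exp (-(a * y)) =
              exp ((1 - a) * y) / (r * y) - exp (-(a * y)) := by
            rw [hn_exp, sub_mul, one_mul, div_mul_eq_mul_div, ← exp_add]
            ring_nf
          linarith
      _ ≤ M * exp (-(a * y)) := by
          gcongr
          exact div_sub_one_le_div_floor hn n
      _ = M / exp (a * y) := by rw [exp_neg, div_eq_mul_inv]
      _ ≤ M / x := by gcongr
  have hlog_x : log x ≤ a * y := (log_le_iff_le_exp (by positivity)).mpr hx_le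
  calc x * (1 - x⁻¹) ^ M ≤ exp (log x - M / x) := mul_one_sub_inv_pow_le_exp hx M
    _ ≤ _ := by gcongr; linarith

theorem tendsto_pow_floor_mul_one_sub_inv_pow {c r : ℝ} (hc : 1 ≤ c) (hr0 : 0 < r)
    (hr : r * log c < 1) :
    Tendsto (fun n : ℕ => c ^ ⌊r * log n⌋₊ * (1 - (c ^ ⌊r * log n⌋₊)⁻¹) ^ (n / ⌊r * log n⌋₊))
      atTop (𝓝 0) := by
  have hlog : Tendsto (fun n : ℕ => log n) atTop atTop :=
    tendsto_log_atTop.comp tendsto_natCast_atTop_atTop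
  have hbound : Tendsto (fun n : ℕ =>
      exp (r * log c * log n - exp ((1 - r * log c) * log n) / (r * log n) + 1)) atTop (𝓝 0) :=
    tendsto_exp_atBot.comp <| tendsto_atBot_add_const_right _ 1 <|
      (tendsto_mul_sub_exp_div_atBot _ (by linarith) hr0).comp hlog
  refine squeeze_zero' (Eventually.of_forall fun n => ?_) ?_ hbound
  · exact mul_nonneg (by positivity)
      (pow_nonneg (sub_nonneg.mpr (inv_le_one_of_one_le₀ (one_le_pow₀ hc))) _)
  · filter_upwards [(hlog.const_mul_atTop hr0).eventually_ge_atTop 1] with n hn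
    exact pow_floor_mul_one_sub_inv_pow_le hc hr0 hn

end Asymptotics

/-- For an alphabet of size `2k` (`k ≥ 1`) and `0 < r < 1/log(2k)`, the
probability that a uniformly random word of length `n` fails to contain some word of
length `⌊r log n⌋` is at most `(2k)^⌊r log n⌋ (1-(2k)^{-⌊r log n⌋})^⌊n/⌊r log n⌋⌋`,
and this bound tends to `0` as `n → ∞`. -/
theorem stmt_0 (k : ℕ) (hk : 1 ≤ k) (A : Type) [Fintype A]
    (hA : Fintype.card A = 2 * k) (r : ℝ) (hr0 : 0 < r)
    (hr : r < 1 / Real.log (2 * k)) :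
    (∀ n : ℕ,
      ((Set.ncard {v : Fin n → A |
          ∃ w : Fin (⌊r * Real.log n⌋₊) → A, ¬ WordAppears v w} : ℝ) / (2 * k : ℝ) ^ n
        ≤ (2 * k : ℝ) ^ (⌊r * Real.log n⌋₊) *
            (1 - ((2 * k : ℝ) ^ (⌊r * Real.log n⌋₊))⁻¹) ^ (n / ⌊r * Real.log n⌋₊)))
    ∧ Tendsto (fun n : ℕ => (2 * k : ℝ) ^ (⌊r * Real.log n⌋₊) *
          (1 - ((2 * k : ℝ) ^ (⌊r * Real.log n⌋₊))⁻¹) ^ (n / ⌊r * Real.log n⌋₊))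
        atTop (nhds 0) := by
  have hk' : (1 : ℝ) ≤ k := by exact_mod_cast hk
  have : Nonempty A := Fintype.card_pos_iff.mp (by omega)
  refine ⟨fun n => ?_, tendsto_pow_floor_mul_one_sub_inv_pow (by linarith) hr0 ?_⟩
  · simpa [hA] using ncard_exists_not_wordAppears_div_le (A := A) n ⌊r * Real.log n⌋₊
  · rwa [lt_div_iff₀ (Real.log_pos (by linarith))] at hr
end

section
/- Let k ∈ ℕ, k ≥ 1, and set r = 1/(2·log(2k)). If (ℓ_n) is a sequence of natural numbers with ℓ_n → ∞, then the probability that a uniformly random word of length ℓ_n over an alphabet of size 2k contains every word of length at most ⌊r·log(ℓ_n)⌋ as a contiguous subword tends to 1 as n → ∞. -/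
/-!
Let `q = |A|` and `M = ⌊r log ℓ⌋`, so that `q ^ M ≤ √ℓ`. Every word of length at most `M` is a
prefix of one of length `M`, so it suffices that all `q ^ M` words of length `M` appear. A word
avoiding a fixed `w` of length `M` avoids it in each of the `ℓ / M` disjoint blocks of length `M`,
so a union bound makes the proportion of bad words at most
`q ^ M (1 - q ^ (-M)) ^ (ℓ / M) ≤ √ℓ exp (1 - √ℓ / (r log ℓ))`, which tends to `0`.
-/

open Filter

open Real Topology

namespace WordAppears

variable {A : Type} {n m L : ℕ}

theorem append_self (u : Fin m → A) (v : Fin n → A) : WordAppears (Fin.append u v) u := by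
  refine ⟨0, by omega, fun j => ?_⟩
  rw [← Fin.append_left u v j]
  congr 1
  ext
  simp

theorem append_left {w : Fin L → A} {v : Fin n → A} (h : WordAppears v w) (u : Fin m → A) :
    WordAppears (Fin.append u v) w := by
  obtain ⟨i, hi, hw⟩ := h
  refine ⟨m + i, by omega, fun j => ?_⟩
  rw [← hw j, ← Fin.append_right u v]
  congr 1
  ext
  simp [add_assoc]

theorem of_forall_of_le [Nonempty A] {M : ℕ} {v : Fin n → A} (hLM : L ≤ M)
    (h : ∀ w : Fin M → A, WordAppears v w) (w : Fin L → A) : WordAppears v w := by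
  obtain ⟨i, hi, hw⟩ := h fun j => if hj : (j : ℕ) < L then w ⟨j, hj⟩ else Classical.arbitrary A
  exact ⟨i, by omega, fun j => by simpa using hw ⟨j, by omega⟩⟩

end WordAppears

theorem Nat.card_subtype_ne {α : Type*} [Finite α] (a : α) :
    Nat.card {x : α // x ≠ a} = Nat.card α - 1 := by
  classical
  have := Fintype.ofFinite α
  simp [Nat.card_eq_fintype_card, Fintype.card_subtype_compl]

section Counting

variable {A : Type} [Fintype A] {m : ℕ}

local notation "q" => Fintype.card A

theorem card_not_wordAppears_add_le (w : Fin m → A) (l : ℕ) :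
    Nat.card {v : Fin (m + l) → A // ¬ WordAppears v w} ≤
      (q ^ m - 1) * Nat.card {v : Fin l → A // ¬ WordAppears v w} := by
  let pre (v : Fin (m + l) → A) : Fin m → A := fun i => v (Fin.castAdd l i)
  let suf (v : Fin (m + l) → A) : Fin l → A := fun i => v (Fin.natAdd m i)
  have hsplit (v : Fin (m + l) → A) : Fin.append (pre v) (suf v) = v := Fin.append_castAdd_natAdd
  rw [show q ^ m = Nat.card (Fin m → A) by simp, ← Nat.card_subtype_ne w, ← Nat.card_prod]
  refine Nat.card_le_card_of_injective
    (fun v => (⟨pre v.1, fun h => v.2 ?_⟩, ⟨suf v.1, fun h => v.2 ?_⟩)) ?_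
  · rw [← hsplit v.1, h]
    exact .append_self w _
  · rw [← hsplit v.1]
    exact h.append_left _
  · rintro ⟨v, _⟩ ⟨v', _⟩ h
    simp only [Prod.mk.injEq, Subtype.mk.injEq] at h
    rw [Subtype.mk.injEq, ← hsplit v, ← hsplit v', h.1, h.2]

theorem card_not_wordAppears_le (w : Fin m → A) {N l : ℕ} (h : N * m ≤ l) :
    Nat.card {v : Fin l → A // ¬ WordAppears v w} ≤ (q ^ m - 1) ^ N * q ^ (l - N * m) := by
  induction N generalizing l with
  | zero => simpa using Finite.card_subtype_le (α := Fin l → A) _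
  | succ N ih =>
    obtain ⟨l, rfl⟩ : ∃ l', l = m + l' := ⟨l - m, by rw [Nat.succ_mul] at h; omega⟩
    calc _ ≤ (q ^ m - 1) * Nat.card {v : Fin l → A // ¬ WordAppears v w} :=
          card_not_wordAppears_add_le w l
      _ ≤ (q ^ m - 1) * ((q ^ m - 1) ^ N * q ^ (l - N * m)) :=
          Nat.mul_le_mul_left _ (ih (by rw [Nat.succ_mul] at h; omega))
      _ = (q ^ m - 1) ^ (N + 1) * q ^ (m + l - (N + 1) * m) := by
          rw [Nat.succ_mul, show m + l - (N * m + m) = l - N * m by omega]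
          ring

theorem ncard_not_forall_wordAppears_le [Nonempty A] (M l : ℕ) :
    Set.ncard {v : Fin l → A | ¬ ∀ L : ℕ, L ≤ M → ∀ w : Fin L → A, WordAppears v w} ≤
      q ^ M * ((q ^ M - 1) ^ (l / M) * q ^ (l - l / M * M)) := by
  have hsub : {v : Fin l → A | ¬ ∀ L : ℕ, L ≤ M → ∀ w : Fin L → A, WordAppears v w} ⊆
      ⋃ w : Fin M → A, {v | ¬ WordAppears v w} := by
    intro v hv
    by_contra hall
    simp only [Set.mem_iUnion, Set.mem_ofPred_eq, not_exists, not_not] at hall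
    exact hv fun L hL => .of_forall_of_le hL hall
  calc _ ≤ _ := Set.ncard_le_ncard hsub
    _ ≤ ∑ w : Fin M → A, Set.ncard {v : Fin l → A | ¬ WordAppears v w} :=
        Set.ncard_iUnion_le_of_fintype _
    _ ≤ ∑ _w : Fin M → A, (q ^ M - 1) ^ (l / M) * q ^ (l - l / M * M) :=
        Finset.sum_le_sum fun w _ => card_not_wordAppears_le w (Nat.div_mul_le_self l M)
    _ = _ := by simp

theorem ncard_div_card_pow_eq_one_sub [Nonempty A] {l : ℕ} (P : (Fin l → A) → Prop) :
    (Set.ncard {v | P v} : ℝ) / (q : ℝ) ^ l = 1 - (Set.ncard {v | ¬ P v} : ℝ) / (q : ℝ) ^ l := by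
  have hsum := Set.ncard_add_ncard_compl {v | P v}
  rw [Set.compl_ofPred, Nat.card_fun, Nat.card_eq_fintype_card, Nat.card_fin] at hsum
  rw [eq_sub_iff_add_eq, ← add_div, div_eq_one_iff_eq (by positivity)]
  exact_mod_cast hsum

theorem ncard_not_forall_wordAppears_div_le [Nonempty A] (M l : ℕ) :
    (Set.ncard {v : Fin l → A | ¬ ∀ L : ℕ, L ≤ M → ∀ w : Fin L → A, WordAppears v w} : ℝ) /
        (q : ℝ) ^ l ≤ (q : ℝ) ^ M * (1 - ((q : ℝ) ^ M)⁻¹) ^ (l / M) := by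
  have hqM : 1 ≤ q ^ M := Nat.one_le_pow _ _ Fintype.card_pos
  have hcount := ncard_not_forall_wordAppears_le (A := A) M l
  rw [div_le_iff₀ (by positivity)]
  calc _ ≤ (q : ℝ) ^ M * (((q : ℝ) ^ M - 1) ^ (l / M) * (q : ℝ) ^ (l - l / M * M)) := by
        exact_mod_cast hcount
    _ = (q : ℝ) ^ M * (1 - ((q : ℝ) ^ M)⁻¹) ^ (l / M) * (q : ℝ) ^ l := by
        have hP : (1 - ((q : ℝ) ^ M)⁻¹) * (q : ℝ) ^ M = (q : ℝ) ^ M - 1 := by field_simp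
        rw [← pow_sub_mul_pow (q : ℝ) (Nat.div_mul_le_self l M), mul_comm (l / M) M, pow_mul,
          ← hP, mul_pow]
        ring

end Counting

theorem one_sub_inv_pow_le_exp {P : ℝ} (hP : 1 ≤ P) (N : ℕ) :
    (1 - P⁻¹) ^ N ≤ exp (-(N / P)) := by
  calc (1 - P⁻¹) ^ N ≤ exp (-P⁻¹) ^ N :=
        pow_le_pow_left₀ (sub_nonneg.2 (inv_le_one_of_one_le₀ hP)) (one_sub_le_exp_neg _) N
    _ = exp (-(N / P)) := by rw [← exp_nat_mul]; ring_nf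

theorem pow_floor_le_sqrt {q x : ℝ} (hq : 1 < q) (hx : 1 ≤ x) :
    q ^ ⌊(1 / (2 * log q)) * log x⌋₊ ≤ √x := by
  have hlogq : 0 < log q := log_pos hq
  have hd : 0 ≤ (1 / (2 * log q)) * log x := mul_nonneg (by positivity) (log_nonneg hx)
  calc q ^ ⌊(1 / (2 * log q)) * log x⌋₊ = q ^ (⌊(1 / (2 * log q)) * log x⌋₊ : ℝ) :=
        (rpow_natCast _ _).symm
    _ ≤ q ^ ((1 / (2 * log q)) * log x) := rpow_le_rpow_of_exponent_le hq.le (Nat.floor_le hd)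
    _ = √x := by
        rw [sqrt_eq_rpow, rpow_def_of_pos (by linarith), rpow_def_of_pos (by linarith)]
        congr 1
        field_simp

theorem div_sub_one_le_natCast_div {l M : ℕ} {d : ℝ} (hM : 0 < M) (hMd : (M : ℝ) ≤ d) :
    (l : ℝ) / d - 1 ≤ (l / M : ℕ) := by
  rw [← Nat.floor_div_eq_div (K := ℝ)]
  refine le_trans ?_ (Nat.sub_one_lt_floor _).le
  gcongr

theorem pow_floor_mul_one_sub_inv_pow_le_s1 {q : ℝ} (hq : 1 < q) {l : ℕ} (hl : q ^ 2 ≤ l) :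
    q ^ ⌊(1 / (2 * log q)) * log l⌋₊ *
        (1 - (q ^ ⌊(1 / (2 * log q)) * log l⌋₊)⁻¹) ^ (l / ⌊(1 / (2 * log q)) * log l⌋₊) ≤
      √l * exp (1 - √l / ((1 / (2 * log q)) * log l)) := by
  set d := (1 / (2 * log q)) * log l
  set M := ⌊d⌋₊
  have hl1 : (1 : ℝ) ≤ l := le_trans (one_le_pow₀ hq.le) hl
  have hd1 : 1 ≤ d := by
    have hlog := log_le_log (by positivity) hl
    rw [log_pow, Nat.cast_ofNat] at hlog
    have hlogq := log_pos hq
    rw [show d = log l / (2 * log q) from one_div_mul_eq_div _ _, le_div_iff₀ (by positivity)]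
    linarith
  have hN : √l / d - 1 ≤ (l / M : ℕ) / √l := by
    have hs : 1 ≤ √l := one_le_sqrt.2 hl1
    have hexpand : (√l / d - 1) * √l = l / d - √l := by
      rw [sub_mul, div_mul_eq_mul_div, mul_self_sqrt (by linarith), one_mul]
    rw [le_div_iff₀ (by linarith)]
    calc (√l / d - 1) * √l ≤ l / d - 1 := by linarith
      _ ≤ (l / M : ℕ) :=
        div_sub_one_le_natCast_div (Nat.floor_pos.2 hd1) (Nat.floor_le (by linarith))
  have hP : q ^ M ≤ √l := pow_floor_le_sqrt hq hl1
  have hP1 : 1 ≤ q ^ M := one_le_pow₀ hq.le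
  gcongr
  · exact pow_nonneg (sub_nonneg.2 (inv_le_one_of_one_le₀ hP1)) _
  calc (1 - (q ^ M)⁻¹) ^ (l / M) ≤ exp (-((l / M : ℕ) / q ^ M)) := one_sub_inv_pow_le_exp hP1 _
    _ ≤ exp (1 - √l / d) := by
      gcongr
      have : ((l / M : ℕ) : ℝ) / √l ≤ (l / M : ℕ) / q ^ M :=
        div_le_div_of_nonneg_left (by positivity) (by positivity) hP
      linarith

theorem tendsto_sqrt_mul_exp_one_sub_sqrt_div_log {c : ℝ} (hc : 0 < c) :
    Tendsto (fun x => √x * exp (1 - √x / (c * log x))) atTop (𝓝 0) := by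
  have hsmall : ∀ᶠ x in atTop, c * log x * log x ≤ √x := by
    filter_upwards [(isLittleO_log_rpow_rpow_atTop 2 (by norm_num : (0:ℝ) < 1 / 2)).bound
      (inv_pos.2 hc)] with x hx
    rw [norm_eq_abs, norm_eq_abs, rpow_two, abs_pow, sq_abs, ← sqrt_eq_rpow,
      abs_of_nonneg (sqrt_nonneg _)] at hx
    have := mul_le_mul_of_nonneg_left hx hc.le
    rwa [← mul_assoc, mul_inv_cancel₀ hc.ne', one_mul, sq, ← mul_assoc] at this
  have hexponent : Tendsto (fun x => log x / 2 + (1 - √x / (c * log x))) atTop atBot := by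
    refine tendsto_atBot_mono' atTop ?_ (tendsto_atBot_add_const_left atTop 1
      (tendsto_neg_atTop_atBot.comp (tendsto_log_atTop.atTop_div_const two_pos)))
    filter_upwards [hsmall, eventually_gt_atTop 1] with x hx hx1
    have hlog := log_pos hx1
    have : log x ≤ √x / (c * log x) := by rw [le_div_iff₀ (by positivity)]; linarith
    simp only [Function.comp_apply]
    linarith
  refine (tendsto_exp_atBot.comp hexponent).congr' ?_
  filter_upwards [eventually_gt_atTop 0] with x hx
  rw [Function.comp_apply, exp_add, sqrt_eq_rpow, rpow_def_of_pos hx]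
  ring_nf

theorem tendsto_ncard_forall_wordAppears_div {A : Type} [Fintype A] (hA : 1 < Fintype.card A)
    {ℓ : ℕ → ℕ} (hℓ : Tendsto ℓ atTop atTop) :
    Tendsto (fun n : ℕ =>
        (Set.ncard {v : Fin (ℓ n) → A |
            ∀ L : ℕ, L ≤ ⌊(1 / (2 * log (Fintype.card A))) * log (ℓ n)⌋₊ →
              ∀ w : Fin L → A, WordAppears v w} : ℝ) / (Fintype.card A : ℝ) ^ (ℓ n))
      atTop (𝓝 1) := by
  have : Nonempty A := Fintype.card_pos_iff.1 (by omega)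
  have hq : (1 : ℝ) < Fintype.card A := by exact_mod_cast hA
  have hbad := squeeze_zero' (.of_forall fun n => by positivity)
    (hℓ.eventually (eventually_ge_atTop (Fintype.card A ^ 2)) |>.mono fun n hn =>
      (ncard_not_forall_wordAppears_div_le _ (ℓ n)).trans
        (pow_floor_mul_one_sub_inv_pow_le_s1 hq (by exact_mod_cast hn)))
    ((tendsto_sqrt_mul_exp_one_sub_sqrt_div_log (by have := log_pos hq; positivity)).comp
      (tendsto_natCast_atTop_atTop.comp hℓ))
  have hgood := hbad.const_sub 1
  rw [sub_zero] at hgood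
  exact hgood.congr fun n => (ncard_div_card_pow_eq_one_sub _).symm

/-- For `k ≥ 1` and `r = 1/(2 log (2k))`, if `ℓ n → ∞`, the probability
that a uniformly random word of length `ℓ n` over an alphabet of size `2k` contains
every word of length at most `⌊r log (ℓ n)⌋` as a contiguous subword tends to `1`. -/
theorem stmt_1 (k : ℕ) (hk : 1 ≤ k) (A : Type) [Fintype A]
    (hA : Fintype.card A = 2 * k) (ℓ : ℕ → ℕ) (hℓ : Tendsto ℓ atTop atTop) :
    Tendsto (fun n : ℕ =>
        (Set.ncard {v : Fin (ℓ n) → A |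
            ∀ L : ℕ, L ≤ ⌊(1 / (2 * Real.log (2 * k))) * Real.log (ℓ n)⌋₊ →
              ∀ w : Fin L → A, WordAppears v w} : ℝ) / (2 * k : ℝ) ^ (ℓ n))
      atTop (nhds 1) := by
  have hq : (Fintype.card A : ℝ) = 2 * k := by rw [hA]; push_cast; rfl
  have := tendsto_ncard_forall_wordAppears_div (A := A) (by omega) hℓ
  rwa [hq] at this
end

section
/- Let X be the Cayley graph of an infinite finitely generated group, regarded as a geodesic metric space, and let c ∈ X be a vertex. Then for every vertex a with d(a,c) = ρ > 0 there exists a geodesic ray γ starting at a such that γ avoids the open ball of radius ρ/2 around c. -/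
/-!
Since `G` is infinite and balls are finite, there are geodesic segments of every length `2n`;
translating one so that its midpoint is `a` gives two geodesics `β₁, β₂` of length `n` from `a`
with `d(β₁ i, β₂ j) = i + j`. If both met the open ball `B(c, ρ/2)`, at `y` and `w`, then
`2ρ ≤ d(y,a) + d(a,w) + d(y,c) + d(w,c) ≤ 2 (d(y,c) + d(w,c)) < 2ρ`. So for every `n` there is a
geodesic segment of length `n` from `a` avoiding the ball, and Kőnig's lemma (balls are finite)
turns these into a geodesic ray.
-/

open Pointwise

/-- The symmetrized generating set `S ∪ S⁻¹`. -/
def genSet {G : Type} [Group G] (S : Finset G) : Set G :=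
  (S : Set G) ∪ (S : Set G)⁻¹

/-- Word length of `g` with respect to `S`: least `n` with `g` a product of `n`
elements of `S ∪ S⁻¹`. -/
noncomputable def wlen {G : Type} [Group G] (S : Finset G) (g : G) : ℕ :=
  sInf {n : ℕ | g ∈ (genSet S) ^ n}

/-- Word distance between `x` and `y`. -/
noncomputable def wdist {G : Type} [Group G] (S : Finset G) (x y : G) : ℕ :=
  wlen S (x⁻¹ * y)

/-- Kőnig's lemma, for properties `P n` of sequences that depend only on the first `n + 1` terms,
all of which range over finite sets. -/
theorem exists_seq_forall_of_forall_exists {β : Type*} (P : ℕ → (ℕ → β) → Prop)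
    (s : ℕ → Set β) (hs : ∀ i, (s i).Finite) (hmem : ∀ n γ, P n γ → ∀ i ≤ n, γ i ∈ s i)
    (hlocal : ∀ n γ δ, P n γ → (∀ i ≤ n, γ i = δ i) → P n δ)
    (hsucc : ∀ n γ, P (n + 1) γ → P n γ) (hne : ∀ n, ∃ γ, P n γ) :
    ∃ γ, ∀ n, P n γ := by
  have hmono {m n : ℕ} (hmn : m ≤ n) {γ : ℕ → β} (h : P n γ) : P m γ := by
    induction n, hmn using Nat.le_induction with
    | base => exact h
    | succ n _ ih => exact ih (hsucc n γ h)
  let α (n : ℕ) := {p : Fin (n + 1) → β // ∃ γ, P n γ ∧ ∀ i : Fin (n + 1), γ i = p i}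
  let π {m n : ℕ} (hmn : m ≤ n) (p : α n) : α m :=
    ⟨p.1 ∘ Fin.castLE (by omega), by
      obtain ⟨γ, hγ, hp⟩ := p.2
      exact ⟨γ, hmono hmn hγ, fun i => hp (Fin.castLE _ i)⟩⟩
  have hfin (n : ℕ) : Finite (α n) := by
    have : Finite (Set.pi Set.univ fun i : Fin (n + 1) => s i) :=
      (Set.Finite.pi (ι := Fin (n + 1)) fun i => hs i).to_subtype
    refine Finite.of_injective
      (fun p : α n => (⟨p.1, fun i _ => ?_⟩ : Set.pi Set.univ fun i : Fin (n + 1) => s i))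
      fun p q hpq => Subtype.ext (congrArg Subtype.val hpq :)
    obtain ⟨γ, hγ, hp⟩ := p.2
    exact hp i ▸ hmem n γ hγ i (by omega)
  have hnonempty (n : ℕ) : Nonempty (α n) := by
    obtain ⟨γ, hγ⟩ := hne n
    exact ⟨⟨fun i => γ i, γ, hγ, fun _ => rfl⟩⟩
  obtain ⟨f, hf⟩ := exists_seq_forall_proj_of_forall_finite (α := α) π
    (fun _ _ => rfl) (fun _ _ _ _ _ _ => rfl) (fun _ _ => Set.toFinite _)
  refine ⟨fun k => (f k).1 (Fin.last k), fun n => ?_⟩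
  obtain ⟨δ, hδ, hδf⟩ := (f n).2
  refine hlocal n δ _ hδ fun i hi => (hδf ⟨i, by omega⟩).trans ?_
  exact congrFun (congrArg Subtype.val (hf (i := i) hi)) (Fin.last i)

section WordMetric

variable {G : Type} [Group G] {S : Finset G}

lemma exists_mem_genSet_pow (hgen : Subgroup.closure (S : Set G) = ⊤) (g : G) :
    ∃ n, g ∈ genSet S ^ n := by
  have hg : g ∈ Submonoid.closure (genSet S) := by
    rw [genSet, ← Subgroup.closure_toSubmonoid, hgen]
    trivial
  induction hg using Submonoid.closure_induction with
  | mem x hx => exact ⟨1, by rwa [pow_one]⟩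
  | one => exact ⟨0, by simp⟩
  | mul x y _ _ hx hy =>
    obtain ⟨m, hx⟩ := hx
    obtain ⟨n, hy⟩ := hy
    exact ⟨m + n, pow_add (genSet S) m n ▸ Set.mul_mem_mul hx hy⟩

lemma wlen_mem_pow (hgen : Subgroup.closure (S : Set G) = ⊤) (g : G) :
    g ∈ genSet S ^ wlen S g :=
  Nat.sInf_mem (exists_mem_genSet_pow hgen g)

lemma wlen_le_of_mem_pow {g : G} {n : ℕ} (h : g ∈ genSet S ^ n) : wlen S g ≤ n :=
  Nat.sInf_le h

lemma wlen_one : wlen S (1 : G) = 0 :=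
  Nat.le_zero.mp (wlen_le_of_mem_pow (by simp))

lemma genSet_inv : (genSet S)⁻¹ = genSet S := by
  ext x
  simp [genSet, or_comm]

lemma wlen_inv (g : G) : wlen S g⁻¹ = wlen S g := by
  have hpow (n : ℕ) : g⁻¹ ∈ genSet S ^ n ↔ g ∈ genSet S ^ n := by
    rw [← Set.mem_inv, ← inv_pow, genSet_inv]
  simp only [wlen, hpow]

lemma wlen_mul_le (hgen : Subgroup.closure (S : Set G) = ⊤) (g h : G) :
    wlen S (g * h) ≤ wlen S g + wlen S h :=
  wlen_le_of_mem_pow (pow_add (genSet S) _ _ ▸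
    Set.mul_mem_mul (wlen_mem_pow hgen g) (wlen_mem_pow hgen h))

lemma wdist_self (x : G) : wdist S x x = 0 := by
  simp [wdist, wlen_one]

lemma wdist_comm (x y : G) : wdist S x y = wdist S y x := by
  rw [wdist, ← wlen_inv, mul_inv_rev, inv_inv, wdist]

lemma wdist_triangle (hgen : Subgroup.closure (S : Set G) = ⊤) (x y z : G) :
    wdist S x z ≤ wdist S x y + wdist S y z := by
  simpa [wdist, mul_assoc] using wlen_mul_le hgen (x⁻¹ * y) (y⁻¹ * z)

lemma wdist_mul_left (g x y : G) : wdist S (g * x) (g * y) = wdist S x y := by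
  simp [wdist, mul_assoc]

lemma finite_setOf_wdist_le (hgen : Subgroup.closure (S : Set G) = ⊤) (a : G) (n : ℕ) :
    {x | wdist S a x ≤ n}.Finite := by
  have hpow (k : ℕ) : (genSet S ^ k).Finite := by
    induction k with
    | zero => simp
    | succ k ih => exact pow_succ (genSet S) k ▸ ih.mul (S.finite_toSet.union S.finite_toSet.inv)
  refine ((Set.finite_le_nat n).biUnion fun k _ => (hpow k).smul_set (a := a)).subset ?_
  intro x hx
  exact Set.mem_biUnion (x := wdist S a x) hx
    (Set.mem_smul_set_iff_inv_smul_mem.mpr (wlen_mem_pow hgen _))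

end WordMetric

section Geodesic

variable {G : Type} [Group G] {S : Finset G}

def IsGeodesicOn (S : Finset G) (γ : ℕ → G) (n : ℕ) : Prop :=
  ∀ i j, i ≤ j → j ≤ n → wdist S (γ i) (γ j) = j - i

lemma IsGeodesicOn.mono {γ : ℕ → G} {m n : ℕ} (h : IsGeodesicOn S γ n) (hmn : m ≤ n) :
    IsGeodesicOn S γ m :=
  fun i j hij hj => h i j hij (hj.trans hmn)

lemma IsGeodesicOn.mul_left {γ : ℕ → G} {n : ℕ} (h : IsGeodesicOn S γ n) (g : G) :
    IsGeodesicOn S (fun i => g * γ i) n :=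
  fun i j hij hj => (wdist_mul_left g _ _).trans (h i j hij hj)

lemma exists_path_of_mem_genSet_pow {g : G} {n : ℕ} (hg : g ∈ genSet S ^ n) :
    ∃ γ : ℕ → G, γ 0 = 1 ∧ γ n = g ∧ ∀ k < n, (γ k)⁻¹ * γ (k + 1) ∈ genSet S := by
  induction n generalizing g with
  | zero => exact ⟨fun _ => 1, rfl, (Set.mem_one.mp hg).symm, by simp⟩
  | succ n ih =>
    obtain ⟨u, hu, s, hs, rfl⟩ := Set.mem_mul.mp (pow_succ (genSet S) n ▸ hg)
    obtain ⟨γ, hγ0, hγn, hγ⟩ := ih hu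
    refine ⟨fun k => if k ≤ n then γ k else u * s, by simp [hγ0], by simp, fun k hk => ?_⟩
    rcases Nat.lt_succ_iff_lt_or_eq.mp hk with hk | rfl
    · simpa [hk.le, Nat.succ_le_of_lt hk] using hγ k hk
    · simpa [hγn] using hs

lemma wdist_le_of_steps_mem_genSet (hgen : Subgroup.closure (S : Set G) = ⊤) {γ : ℕ → G}
    {n : ℕ} (hγ : ∀ k < n, (γ k)⁻¹ * γ (k + 1) ∈ genSet S) {i j : ℕ} (hij : i ≤ j)
    (hj : j ≤ n) : wdist S (γ i) (γ j) ≤ j - i := by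
  induction j, hij using Nat.le_induction with
  | base => simp [wdist_self]
  | succ j hij ih =>
    calc wdist S (γ i) (γ (j + 1)) ≤ wdist S (γ i) (γ j) + wdist S (γ j) (γ (j + 1)) :=
          wdist_triangle hgen _ _ _
      _ ≤ (j - i) + 1 :=
          add_le_add (ih (by omega)) (wlen_le_of_mem_pow (by rw [pow_one]; exact hγ j hj))
      _ = j + 1 - i := by omega

lemma isGeodesicOn_of_steps_mem_genSet (hgen : Subgroup.closure (S : Set G) = ⊤)
    {γ : ℕ → G} {n : ℕ} (hγ : ∀ k < n, (γ k)⁻¹ * γ (k + 1) ∈ genSet S)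
    (hend : wdist S (γ 0) (γ n) = n) : IsGeodesicOn S γ n := by
  intro i j hij hj
  have h0i := wdist_le_of_steps_mem_genSet hgen hγ (Nat.zero_le i) (hij.trans hj)
  have hij' := wdist_le_of_steps_mem_genSet hgen hγ hij hj
  have hjn := wdist_le_of_steps_mem_genSet hgen hγ hj le_rfl
  have h0n := wdist_triangle hgen (γ 0) (γ i) (γ n)
  have hin := wdist_triangle hgen (γ i) (γ j) (γ n)
  omega

lemma exists_isGeodesicOn [Infinite G] (hgen : Subgroup.closure (S : Set G) = ⊤) (n : ℕ) :
    ∃ γ : ℕ → G, IsGeodesicOn S γ n := by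
  obtain ⟨g, hg⟩ : ∃ g, n < wlen S g := by
    simpa [wdist] using (finite_setOf_wdist_le hgen 1 n).exists_notMem
  obtain ⟨γ, hγ0, hγg, hγ⟩ := exists_path_of_mem_genSet_pow (wlen_mem_pow hgen g)
  have hend : wdist S (γ 0) (γ (wlen S g)) = wlen S g := by simp [hγ0, hγg, wdist]
  exact ⟨γ, (isGeodesicOn_of_steps_mem_genSet hgen hγ hend).mono hg.le⟩

end Geodesic

section Rays

variable {G : Type} [Group G] {S : Finset G}

lemma wdist_le_add_of_wdist_eq_add (hgen : Subgroup.closure (S : Set G) = ⊤) {x y z : G}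
    (h : wdist S x z = wdist S x y + wdist S y z) (c : G) :
    wdist S y c ≤ wdist S x c + wdist S z c := by
  have hx := wdist_triangle hgen y x c
  have hz := wdist_triangle hgen y z c
  have hxz := wdist_triangle hgen x c z
  rw [wdist_comm y x] at hx
  rw [wdist_comm c z] at hxz
  omega

lemma exists_isGeodesicOn_avoiding [Infinite G] (hgen : Subgroup.closure (S : Set G) = ⊤)
    (a c : G) (n : ℕ) :
    ∃ γ : ℕ → G, γ 0 = a ∧ IsGeodesicOn S γ n ∧ ∀ i ≤ n, wdist S a c ≤ 2 * wdist S (γ i) c := by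
  obtain ⟨f, hf⟩ := exists_isGeodesicOn hgen (2 * n)
  set β : ℕ → G := fun i => a * (f n)⁻¹ * f i with hβ_def
  have hβ : IsGeodesicOn S β (2 * n) := by
    simpa only [hβ_def, mul_assoc] using hf.mul_left (a * (f n)⁻¹)
  have hβn : β n = a := by simp [hβ_def]
  have hleft : IsGeodesicOn S (fun i => β (n - i)) n := fun i j hij hj => by
    rw [wdist_comm, hβ (n - j) (n - i) (by omega) (by omega)]
    omega
  have hright : IsGeodesicOn S (fun i => β (n + i)) n := fun i j hij hj => by
    rw [hβ (n + i) (n + j) (by omega) (by omega)]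
    omega
  by_cases h : ∀ i ≤ n, wdist S a c ≤ 2 * wdist S (β (n - i)) c
  · exact ⟨_, by simp [hβn], hleft, h⟩
  push Not at h
  obtain ⟨i, hi, hfar⟩ := h
  refine ⟨_, by simp [hβn], hright, fun j hj => ?_⟩
  -- `a = β n` lies on a geodesic from `β (n - i)` to `β (n + j)`
  have hbetween := wdist_le_add_of_wdist_eq_add hgen (x := β (n - i)) (y := β n)
    (z := β (n + j)) (by rw [hβ _ _ (by omega) (by omega), hβ _ _ (by omega) (by omega),
      hβ _ _ (by omega) (by omega)]; omega) c
  rw [hβn] at hbetween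
  omega

lemma exists_geodesic_ray_of_forall_isGeodesicOn (hgen : Subgroup.closure (S : Set G) = ⊤)
    (a : G) (Q : G → Prop) (h : ∀ n, ∃ γ : ℕ → G, γ 0 = a ∧ IsGeodesicOn S γ n ∧ ∀ i ≤ n, Q (γ i)) :
    ∃ γ : ℕ → G, γ 0 = a ∧ (∀ n, IsGeodesicOn S γ n) ∧ ∀ i, Q (γ i) := by
  obtain ⟨γ, hγ⟩ := exists_seq_forall_of_forall_exists
    (fun n γ => γ 0 = a ∧ IsGeodesicOn S γ n ∧ ∀ i ≤ n, Q (γ i))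
    (fun i => {x | wdist S a x ≤ i}) (finite_setOf_wdist_le hgen a)
    (fun n γ ⟨h0, hgeo, _⟩ i hi => by simp [← h0, hgeo 0 i (Nat.zero_le i) hi])
    (fun n γ δ ⟨h0, hgeo, hQ⟩ hγδ => by
      refine ⟨(hγδ 0 (Nat.zero_le n)).symm.trans h0, fun i j hij hj => ?_, fun i hi => ?_⟩
      · rw [← hγδ i (by omega), ← hγδ j hj]
        exact hgeo i j hij hj
      · exact hγδ i hi ▸ hQ i hi)
    (fun n γ ⟨h0, hgeo, hQ⟩ => ⟨h0, hgeo.mono n.le_succ, fun i hi => hQ i (by omega)⟩) h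
  exact ⟨γ, (hγ 0).1, fun n => (hγ n).2.1, fun i => (hγ i).2.2 i le_rfl⟩

end Rays

theorem stmt_4_general {G : Type} [Group G] [Infinite G] (S : Finset G)
    (hgen : Subgroup.closure (S : Set G) = ⊤)
    (c a : G) (ρ : ℕ) (hd : wdist S a c = ρ) :
    ∃ γ : ℕ → G, γ 0 = a ∧
      (∀ m n : ℕ, m ≤ n → wdist S (γ m) (γ n) = n - m) ∧
      (∀ n : ℕ, ρ ≤ 2 * wdist S (γ n) c) := by
  subst hd
  obtain ⟨γ, hγ0, hgeo, hfar⟩ := exists_geodesic_ray_of_forall_isGeodesicOn hgen a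
    (fun x => wdist S a c ≤ 2 * wdist S x c) (exists_isGeodesicOn_avoiding hgen a c)
  exact ⟨γ, hγ0, fun m n hmn => hgeo n m n hmn le_rfl, hfar⟩

/-- In the Cayley graph of an infinite finitely generated group, for any
vertex `a` with `d(a,c) = ρ > 0` there is a geodesic ray starting at `a` avoiding the
open ball of radius `ρ/2` around `c`. -/
theorem stmt_4 {G : Type} [Group G] [Infinite G] (S : Finset G)
    (hgen : Subgroup.closure (S : Set G) = ⊤)
    (c a : G) (ρ : ℕ) (hρ : 0 < ρ) (hd : wdist S a c = ρ) :
    ∃ γ : ℕ → G, γ 0 = a ∧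
      (∀ m n : ℕ, m ≤ n → wdist S (γ m) (γ n) = n - m) ∧
      (∀ n : ℕ, ρ ≤ 2 * wdist S (γ n) c) :=
  stmt_4_general S hgen c a ρ hd
end

section
/- Let h, d > 0 and let j be a positive integer. There exists h' > 0 (depending only on h, d, j) such that every finite graph Γ with Cheeger constant h(Γ) ≥ h and all vertex degrees at most d has j-subdivision Γ^{(j)} with Cheeger constant h(Γ^{(j)}) ≥ h'. In particular, the j-subdivision of an expander family is an expander family. -/
/-- Outer vertex boundary of a set `A` in a graph `Γ`. -/
def vbdry {V : Type} (Γ : SimpleGraph V) (A : Set V) : Set V :=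
  {v | v ∉ A ∧ ∃ a ∈ A, Γ.Adj v a}

/-- `Γ` has Cheeger constant at least `h`:
`|∂A| ≥ h · min(|A|, |Aᶜ|)` for every vertex set `A`. -/
def CheegerGE {V : Type} (Γ : SimpleGraph V) (h : ℝ) : Prop :=
  ∀ A : Set V, h * min A.ncard Aᶜ.ncard ≤ ((vbdry Γ A).ncard : ℝ)

/-- Interior vertices of the `j`-subdivision: an oriented edge `x < y` of `Γ` together
with a position `i ∈ Fin (j-1)`. -/
def SubIdx {V : Type} [LinearOrder V] (Γ : SimpleGraph V) (j : ℕ) : Type :=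
  {p : V × V × Fin (j - 1) // p.1 < p.2.1 ∧ Γ.Adj p.1 p.2.1}

/-- The `j`-subdivision of `Γ`: each edge is replaced by a path of length `j`. -/
def subdiv {V : Type} [LinearOrder V] (Γ : SimpleGraph V) (j : ℕ) :
    SimpleGraph (V ⊕ SubIdx Γ j) :=
  SimpleGraph.fromRel (fun u v =>
    match u, v with
    | .inl a, .inl b => j = 1 ∧ Γ.Adj a b
    | .inl a, .inr ⟨(x, y, i), _⟩ => (a = x ∧ (i : ℕ) = 0) ∨ (a = y ∧ (i : ℕ) + 2 = j)
    | .inr ⟨(x, y, i), _⟩, .inr ⟨(x', y', i'), _⟩ =>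
        x = x' ∧ y = y' ∧ (i : ℕ) + 1 = (i' : ℕ)
    | _, _ => False)

instance {V : Type} [LinearOrder V] [Fintype V] [DecidableEq V] (Γ : SimpleGraph V)
    [DecidableRel Γ.Adj] (j : ℕ) : Fintype (SubIdx Γ j) := by
  unfold SubIdx; infer_instance

section Aux
variable {V : Type} [LinearOrder V] {Γ : SimpleGraph V} {j : ℕ}

/-- ordered edges of Γ -/
abbrev OEdge (Γ : SimpleGraph V) : Type := {p : V × V // p.1 < p.2 ∧ Γ.Adj p.1 p.2}

/-- the path replacing edge e in the j-subdivision, as a sequence -/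
def eseq (Γ : SimpleGraph V) (j : ℕ) (e : OEdge Γ) (k : ℕ) : V ⊕ SubIdx Γ j :=
  if h0 : k = 0 then Sum.inl e.1.1
  else if hk : k < j then Sum.inr ⟨(e.1.1, e.1.2, ⟨k - 1, by omega⟩), e.2⟩
  else Sum.inl e.1.2

def pathSet (Γ : SimpleGraph V) (j : ℕ) (e : OEdge Γ) : Set (V ⊕ SubIdx Γ j) :=
  eseq Γ j e '' Set.Iic j

lemma eseq_zero (e : OEdge Γ) : eseq Γ j e 0 = Sum.inl e.1.1 := by simp [eseq]

lemma eseq_last (e : OEdge Γ) (hj : 1 ≤ j) : eseq Γ j e j = Sum.inl e.1.2 := by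
  simp [eseq]; omega

lemma eseq_mid (e : OEdge Γ) {k : ℕ} (h1 : k ≠ 0) (h2 : k < j) :
    eseq Γ j e k = Sum.inr ⟨(e.1.1, e.1.2, ⟨k - 1, by omega⟩), e.2⟩ := by
  simp [eseq, h1, h2]

lemma eseq_adj (e : OEdge Γ) {k : ℕ} (hk : k < j) :
    (subdiv Γ j).Adj (eseq Γ j e k) (eseq Γ j e (k + 1)) := by
  obtain ⟨⟨x, y⟩, hxy, hadj⟩ := e
  rw [subdiv, SimpleGraph.fromRel_adj]
  rcases Nat.eq_zero_or_pos k with rfl | hk1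
  · rcases Nat.lt_or_ge 1 j with hj2 | hj1
    · rw [eseq_zero, eseq_mid _ (by omega) hj2]
      exact ⟨by simp, Or.inl (Or.inl ⟨rfl, rfl⟩)⟩
    · have hj : j = 1 := by omega
      rw [eseq_zero, show (0+1 : ℕ) = j from by omega, eseq_last _ (by omega)]
      exact ⟨by simp [hxy.ne], Or.inl ⟨hj, hadj⟩⟩
  · rcases Nat.lt_or_ge (k+1) j with hkj | hkj
    · rw [eseq_mid _ (by omega) hk, eseq_mid _ (by omega) hkj]
      refine ⟨fun hcon => ?_, Or.inl ⟨rfl, rfl, by simp; omega⟩⟩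
      have := congrArg (fun s : V ⊕ SubIdx Γ j => match s with
        | Sum.inr t => (t.1.2.2 : ℕ) | Sum.inl _ => 0) hcon
      simp at this; omega
    · have hkj' : k + 1 = j := by omega
      rw [eseq_mid _ (by omega) hk, show k+1 = j from hkj', eseq_last _ (by omega)]
      refine ⟨by simp, Or.inr (Or.inr ⟨rfl, by simp; omega⟩)⟩


lemma inl_mem_pathSet_iff (e : OEdge Γ) (hj : 1 ≤ j) (v : V) :
    Sum.inl v ∈ pathSet Γ j e ↔ v = e.1.1 ∨ v = e.1.2 := by
  constructor
  · rintro ⟨k, hk, hkv⟩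
    simp only [Set.mem_Iic] at hk
    rcases Nat.eq_zero_or_pos k with rfl | h1
    · rw [eseq_zero] at hkv; injection hkv with h; exact Or.inl h.symm
    · rcases Nat.lt_or_ge k j with h2 | h2
      · rw [eseq_mid _ (by omega) h2] at hkv; exact absurd hkv (by simp)
      · have hkj : k = j := le_antisymm hk h2
        rw [hkj, eseq_last _ hj] at hkv
        injection hkv with h; exact Or.inr h.symm
  · rintro (rfl | rfl)
    · exact ⟨0, by simp, eseq_zero e⟩
    · exact ⟨j, by simp, eseq_last e hj⟩

lemma inr_mem_pathSet (e : OEdge Γ) (s : SubIdx Γ j) (hs : Sum.inr s ∈ pathSet Γ j e) :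
    s.1.1 = e.1.1 ∧ s.1.2.1 = e.1.2 := by
  obtain ⟨k, hk, hkv⟩ := hs
  simp only [Set.mem_Iic] at hk
  rcases Nat.eq_zero_or_pos k with rfl | h1
  · rw [eseq_zero] at hkv; exact absurd hkv (by simp)
  rcases Nat.lt_or_ge k j with h2 | h2
  · rw [eseq_mid _ (by omega) h2] at hkv
    injection hkv with h
    cases h; exact ⟨rfl, rfl⟩
  · have hkj : k = j := le_antisymm hk h2
    rw [hkj, eseq_last _ (by omega)] at hkv; exact absurd hkv (by simp)

/-- the edge of an interior vertex -/
def edgeOf (s : SubIdx Γ j) : OEdge Γ := ⟨(s.1.1, s.1.2.1), s.2⟩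

lemma inr_mem_own_pathSet (s : SubIdx Γ j) : Sum.inr s ∈ pathSet Γ j (edgeOf s) := by
  obtain ⟨⟨x, y, i⟩, hs⟩ := s
  have hij : (i : ℕ) < j - 1 := i.2
  refine ⟨(i : ℕ) + 1, by simp only [Set.mem_Iic]; omega, ?_⟩
  rw [eseq_mid _ (by omega) (by omega)]
  have hfin : (⟨(i : ℕ) + 1 - 1, by omega⟩ : Fin (j - 1)) = i := by
    apply Fin.ext; simp
  simp only [hfin]
  rfl

lemma ivt_nat {g : ℕ → Prop} {a b : ℕ} (hab : a < b) (ha : g a) (hb : ¬ g b) :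
    ∃ m, a ≤ m ∧ m < b ∧ g m ∧ ¬ g (m + 1) := by
  by_contra hc
  push_neg at hc
  have key : ∀ k, a ≤ k → k ≤ b → g k := by
    intro k hk
    induction k, hk using Nat.le_induction with
    | base => exact fun _ => ha
    | succ n hn ih => exact fun hnb => hc n hn (by omega) (ih (by omega))
  exact hb (key b hab.le le_rfl)

lemma mixed_bdry (hj : 1 ≤ j) (A : Set (V ⊕ SubIdx Γ j)) (e : OEdge Γ)
    (h1 : (pathSet Γ j e ∩ A).Nonempty) (h2 : (pathSet Γ j e \ A).Nonempty) :
    ∃ w ∈ pathSet Γ j e, w ∈ vbdry (subdiv Γ j) A := by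
  obtain ⟨u, ⟨a, ha_le, rfl⟩, huA⟩ := h1
  obtain ⟨w, ⟨b, hb_le, rfl⟩, hwA⟩ := h2
  simp only [Set.mem_Iic] at ha_le hb_le
  rcases lt_trichotomy a b with hab | rfl | hba
  · obtain ⟨m, ham, hmb, hgm, hgm1⟩ := ivt_nat (g := fun k => eseq Γ j e k ∈ A) hab huA hwA
    exact ⟨eseq Γ j e (m+1), ⟨m+1, by simp only [Set.mem_Iic]; omega, rfl⟩, hgm1,
      eseq Γ j e m, hgm, (eseq_adj e (by omega)).symm⟩
  · exact absurd huA hwA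
  · obtain ⟨m, hbm, hma, hgm, hgm1⟩ :=
      ivt_nat (g := fun k => eseq Γ j e k ∉ A) hba hwA (not_not_intro huA)
    exact ⟨eseq Γ j e m, ⟨m, by simp only [Set.mem_Iic]; omega, rfl⟩, hgm,
      eseq Γ j e (m+1), not_not.mp hgm1, eseq_adj e (by omega)⟩


lemma ncard_le_mul_of_fibers {α β : Type} [Finite α] (s : Set α) (f : α → β) (n : ℕ)
    (hf : ∀ b, {x ∈ s | f x = b}.ncard ≤ n) : s.ncard ≤ n * (f '' s).ncard := by
  classical
  cases nonempty_fintype α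
  rw [Set.ncard_eq_toFinset_card' s]
  have h1 : s.toFinset.card ≤ n * (s.toFinset.image f).card := by
    apply Finset.card_le_mul_card_image
    intro b _
    have he : s.toFinset.filter (fun x => f x = b) = {x ∈ s | f x = b}.toFinset := by
      ext x; simp
    rw [he, ← Set.ncard_eq_toFinset_card']
    exact hf b
  calc s.toFinset.card ≤ n * (s.toFinset.image f).card := h1
    _ = n * (f '' s).ncard := by rw [← Set.toFinset_image, ← Set.ncard_eq_toFinset_card']

lemma ncard_le_of_injOn_subset {α β : Type} {s : Set α} {t : Set β} (f : α → β)
    (hmaps : ∀ a ∈ s, f a ∈ t) (hinj : Set.InjOn f s) (ht : t.Finite) :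
    s.ncard ≤ t.ncard :=
  (Set.ncard_image_of_injOn hinj) ▸ Set.ncard_le_ncard (Set.image_subset_iff.mpr hmaps) ht

end Aux

section Counting
variable {V : Type} [Fintype V] [LinearOrder V] {Γ : SimpleGraph V} {j d : ℕ}

/-- edges incident to a given vertex, counted via neighbors -/
lemma ncard_edges_through (v : V) (hd : (Γ.neighborSet v).ncard ≤ d) :
    {e : OEdge Γ | e.1.1 = v ∨ e.1.2 = v}.ncard ≤ d := by
  refine le_trans (ncard_le_of_injOn_subset
    (fun e => if e.1.1 = v then e.1.2 else e.1.1) ?_ ?_ (Γ.neighborSet v).toFinite) hd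
  · rintro e (h1 | h2)
    · simp only [h1, if_pos rfl]
      exact (h1 ▸ e.2.2 : Γ.Adj v e.1.2)
    · have hne : e.1.1 ≠ v := fun hc => absurd (hc ▸ h2 ▸ e.2.1) (lt_irrefl _)
      simp only [if_neg hne]
      exact ((h2 ▸ e.2.2 : Γ.Adj e.1.1 v).symm : Γ.Adj v e.1.1)
  · rintro e he e' he' hee
    have key : ∀ a : OEdge Γ, a ∈ {e : OEdge Γ | e.1.1 = v ∨ e.1.2 = v} →
        a.1 = (min v ((fun e : OEdge Γ => if e.1.1 = v then e.1.2 else e.1.1) a),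
               max v ((fun e : OEdge Γ => if e.1.1 = v then e.1.2 else e.1.1) a)) ∨
        a.1 = (min ((fun e : OEdge Γ => if e.1.1 = v then e.1.2 else e.1.1) a) v,
               max ((fun e : OEdge Γ => if e.1.1 = v then e.1.2 else e.1.1) a) v) := by
      rintro a (h1 | h2)
      · left
        have hX : (fun e : OEdge Γ => if e.1.1 = v then e.1.2 else e.1.1) a = a.1.2 := by
          simp [h1]
        rw [hX, min_eq_left (h1 ▸ a.2.1).le, max_eq_right (h1 ▸ a.2.1).le, ← h1]
      · right
        have hne : a.1.1 ≠ v := fun hc => absurd (hc ▸ h2 ▸ a.2.1) (lt_irrefl _)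
        have hX : (fun e : OEdge Γ => if e.1.1 = v then e.1.2 else e.1.1) a = a.1.1 := by
          simp [hne]
        rw [hX, min_eq_left (h2 ▸ a.2.1).le, max_eq_right (h2 ▸ a.2.1).le, ← h2]
    apply Subtype.ext
    rcases key e he with h | h <;> rcases key e' he' with h' | h' <;>
      rw [h, h', hee] <;> simp [min_comm, max_comm]
  

instance : Finite (SubIdx Γ j) := by unfold SubIdx; infer_instance

/-- mixed edges: path meets both A and its complement -/
def MixSet (Γ : SimpleGraph V) (j : ℕ) (A : Set (V ⊕ SubIdx Γ j)) : Set (OEdge Γ) :=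
  {e | (pathSet Γ j e ∩ A).Nonempty ∧ (pathSet Γ j e \ A).Nonempty}

lemma EB_card_le (B : Set V) (hdeg : ∀ v : V, (Γ.neighborSet v).ncard ≤ d) :
    {e : OEdge Γ | e.1.1 ∈ B}.ncard ≤ d * B.ncard := by
  refine le_trans (ncard_le_mul_of_fibers _ (fun e => e.1.1) d ?_) ?_
  · intro v
    refine le_trans (Set.ncard_le_ncard ?_ (Set.toFinite _)) (ncard_edges_through v (hdeg v))
    rintro e ⟨-, he⟩
    exact Or.inl he
  · gcongr
    · exact Set.toFinite B
    · rintro v ⟨e, he, rfl⟩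
      exact he

lemma count_main (hj : 1 ≤ j) (A : Set (V ⊕ SubIdx Γ j))
    (hdeg : ∀ v : V, (Γ.neighborSet v).ncard ≤ d) :
    A.ncard ≤ (1 + (j - 1) * d) * (Sum.inl ⁻¹' A).ncard + (j - 1) * (MixSet Γ j A).ncard := by
  classical
  set B : Set V := Sum.inl ⁻¹' A with hB
  have hsplit : A = (A ∩ Set.range Sum.inl) ∪ (A ∩ Set.range Sum.inr) := by
    ext x; cases x <;> simp
  have h1 : (A ∩ Set.range Sum.inl).ncard = B.ncard := by
    rw [← Set.image_preimage_eq_inter_range, hB,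
      Set.ncard_image_of_injective _ Sum.inl_injective]
  set I : Set (V ⊕ SubIdx Γ j) := A ∩ Set.range Sum.inr with hI
  set f : V ⊕ SubIdx Γ j → Option (OEdge Γ) :=
    fun u => match u with | .inl _ => none | .inr s => some (edgeOf s) with hf
  have hfib : ∀ b, {x ∈ I | f x = b}.ncard ≤ j - 1 := by
    rintro (_ | e)
    · have : {x ∈ I | f x = none} = ∅ := by
        ext x
        rcases x with v | s <;> simp [hI, hf]
      rw [this]; simp
    · refine le_trans (ncard_le_of_injOn_subset
        (fun x => match x with | .inr s => ((s.1.2.2 : ℕ) : ℕ) | .inl _ => 0)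
        ?_ ?_ (Set.toFinite (Set.Iio (j-1) : Set ℕ))) ?_
      · rintro (v | s) ⟨hx, hfx⟩
        · simp [hf] at hfx
        · exact s.1.2.2.2
      · rintro (v | s) ⟨hx, hfx⟩ <;> try simp [hf] at hfx
        rintro (v' | s') ⟨hx', hfx'⟩ <;> try simp [hf] at hfx'
        intro hval
        simp only at hval
        have h1 : s.1.1 = e.1.1 ∧ s.1.2.1 = e.1.2 := by
          rw [show e = edgeOf s from hfx.symm]; exact ⟨rfl, rfl⟩
        have h2 : s'.1.1 = e.1.1 ∧ s'.1.2.1 = e.1.2 := by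
          rw [show e = edgeOf s' from hfx'.symm]; exact ⟨rfl, rfl⟩
        congr 1
        apply Subtype.ext
        apply Prod.ext (h1.1.trans h2.1.symm)
        apply Prod.ext (h1.2.trans h2.2.symm)
        exact Fin.ext hval
      · rw [← Finset.coe_Iio, Set.ncard_coe_finset, Nat.card_Iio]
  have himg : f '' I ⊆ some '' (MixSet Γ j A ∪ {e : OEdge Γ | e.1.1 ∈ B}) := by
    rintro b ⟨x, hx, rfl⟩
    rcases x with v | s
    · exact absurd hx.2 (by simp)
    · refine ⟨edgeOf s, ?_, rfl⟩
      have hmem : Sum.inr s ∈ pathSet Γ j (edgeOf s) ∩ A :=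
        ⟨inr_mem_own_pathSet s, hx.1⟩
      by_cases hcase : (pathSet Γ j (edgeOf s) \ A).Nonempty
      · exact Or.inl ⟨⟨_, hmem⟩, hcase⟩
      · right
        rw [Set.not_nonempty_iff_eq_empty, Set.diff_eq_empty] at hcase
        exact hcase ⟨0, by simp, eseq_zero (edgeOf s)⟩
  have h2 : I.ncard ≤ (j - 1) * ((MixSet Γ j A).ncard + {e : OEdge Γ | e.1.1 ∈ B}.ncard) := by
    refine le_trans (ncard_le_mul_of_fibers I f (j - 1) hfib) ?_
    gcongr
    refine le_trans (Set.ncard_le_ncard himg (Set.toFinite _)) ?_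
    rw [Set.ncard_image_of_injective _ (Option.some_injective _)]
    exact Set.ncard_union_le _ _
  have h3 : {e : OEdge Γ | e.1.1 ∈ B}.ncard ≤ d * B.ncard := EB_card_le B hdeg
  calc A.ncard ≤ (A ∩ Set.range Sum.inl).ncard + I.ncard := by
        conv_lhs => rw [hsplit]
        exact Set.ncard_union_le _ _
    _ ≤ B.ncard + (j - 1) * ((MixSet Γ j A).ncard + d * B.ncard) := by
        rw [h1]; gcongr
        exact h2.trans (by gcongr)
    _ = (1 + (j - 1) * d) * B.ncard + (j - 1) * (MixSet Γ j A).ncard := by ring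

lemma MixSet_compl (A : Set (V ⊕ SubIdx Γ j)) : MixSet Γ j Aᶜ = MixSet Γ j A := by
  ext e
  simp only [MixSet, Set.mem_setOf_eq, Set.diff_eq, compl_compl]
  rw [and_comm]

lemma bdry_le_mix (hj : 1 ≤ j) (A : Set (V ⊕ SubIdx Γ j)) :
    (vbdry Γ (Sum.inl ⁻¹' A)).ncard ≤ (MixSet Γ j A).ncard := by
  set B := Sum.inl ⁻¹' A with hB
  rw [← Nat.card_coe_set_eq, ← Nat.card_coe_set_eq]
  have hex : ∀ v : ↥(vbdry Γ B), ∃ e : OEdge Γ, e ∈ MixSet Γ j A ∧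
      ((e.1.1 = ↑v ∧ e.1.2 ∈ B) ∨ (e.1.2 = ↑v ∧ e.1.1 ∈ B)) := by
    rintro ⟨v, hvB, b, hbB, hadj⟩
    have hinlv : Sum.inl v ∉ A := hvB
    have hinlb : Sum.inl b ∈ A := hbB
    rcases lt_or_gt_of_ne hadj.ne with hlt | hgt
    · refine ⟨⟨(v, b), hlt, hadj⟩, ⟨⟨Sum.inl b, ?_, hinlb⟩, ⟨Sum.inl v, ?_, hinlv⟩⟩,
        Or.inl ⟨rfl, hbB⟩⟩
      · exact (inl_mem_pathSet_iff _ hj b).mpr (Or.inr rfl)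
      · exact (inl_mem_pathSet_iff _ hj v).mpr (Or.inl rfl)
    · refine ⟨⟨(b, v), hgt, hadj.symm⟩, ⟨⟨Sum.inl b, ?_, hinlb⟩, ⟨Sum.inl v, ?_, hinlv⟩⟩,
        Or.inr ⟨rfl, hbB⟩⟩
      · exact (inl_mem_pathSet_iff _ hj b).mpr (Or.inl rfl)
      · exact (inl_mem_pathSet_iff _ hj v).mpr (Or.inr rfl)
  choose F hF1 hF2 using hex
  apply Nat.card_le_card_of_injective (fun v => (⟨F v, hF1 v⟩ : ↥(MixSet Γ j A)))
  intro v v' heq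
  have heq' : F v = F v' := congrArg Subtype.val heq
  apply Subtype.ext
  rcases hF2 v with ⟨h1, h2⟩ | ⟨h1, h2⟩ <;> rcases hF2 v' with ⟨h1', h2'⟩ | ⟨h1', h2'⟩
  · exact h1.symm.trans (heq' ▸ h1')
  · exact absurd (h1 ▸ heq' ▸ h2') v.2.1
  · exact absurd (h1 ▸ heq'.symm ▸ h2') v.2.1
  · exact h1.symm.trans (heq' ▸ h1')

lemma mix_le_bdry (hj : 1 ≤ j) (hd : 1 ≤ d) (A : Set (V ⊕ SubIdx Γ j))
    (hdeg : ∀ v : V, (Γ.neighborSet v).ncard ≤ d) :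
    (MixSet Γ j A).ncard ≤ d * (vbdry (subdiv Γ j) A).ncard := by
  classical
  set f : OEdge Γ → (V ⊕ SubIdx Γ j) := fun e =>
    if he : e ∈ MixSet Γ j A then (mixed_bdry hj A e he.1 he.2).choose
    else eseq Γ j e 0 with hf
  have hspec : ∀ e (he : e ∈ MixSet Γ j A),
      f e ∈ pathSet Γ j e ∧ f e ∈ vbdry (subdiv Γ j) A := by
    intro e he
    rw [hf]; simp only [dif_pos he]
    exact ⟨(mixed_bdry hj A e he.1 he.2).choose_spec.1,
           (mixed_bdry hj A e he.1 he.2).choose_spec.2⟩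
  have hfib : ∀ w, {e ∈ MixSet Γ j A | f e = w}.ncard ≤ d := by
    intro w
    have hsub : {e ∈ MixSet Γ j A | f e = w} ⊆ {e : OEdge Γ | w ∈ pathSet Γ j e} := by
      rintro e ⟨he, rfl⟩
      exact (hspec e he).1
    refine le_trans (Set.ncard_le_ncard hsub (Set.toFinite _)) ?_
    rcases w with v | s
    · refine le_trans (Set.ncard_le_ncard ?_ (Set.toFinite _)) (ncard_edges_through v (hdeg v))
      intro e he
      rcases (inl_mem_pathSet_iff e hj v).mp he with h | h
      · exact Or.inl h.symm
      · exact Or.inr h.symm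
    · refine le_trans (Set.ncard_le_ncard (t := {edgeOf s}) ?_ (Set.toFinite _)) ?_
      · intro e he
        obtain ⟨hs1, hs2⟩ := inr_mem_pathSet e s he
        apply Subtype.ext
        apply Prod.ext hs1.symm hs2.symm
      · rw [Set.ncard_singleton]; exact hd
  refine le_trans (ncard_le_mul_of_fibers _ f d hfib) ?_
  gcongr
  · exact Set.toFinite _
  · rintro w ⟨e, he, rfl⟩
    exact (hspec e he).2

end Counting



/-- For `h, d > 0` and a positive integer `j`, there is `h' > 0` such that
every finite graph with Cheeger constant at least `h` and vertex degrees at most `d` has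
`j`-subdivision with Cheeger constant at least `h'`. -/
theorem stmt_6 (h : ℝ) (d j : ℕ) (hh : 0 < h) (hd : 0 < d) (hj : 1 ≤ j) :
    ∃ h' : ℝ, 0 < h' ∧
      ∀ (V : Type) [Fintype V] [LinearOrder V] (Γ : SimpleGraph V),
        CheegerGE Γ h → (∀ v : V, (Γ.neighborSet v).ncard ≤ d) →
        CheegerGE (subdiv Γ j) h' := by
  set X : ℝ := 1 + ((j - 1 : ℕ) : ℝ) * (d : ℝ) with hX
  have hXnn : (0 : ℝ) ≤ X := by positivity
  set K : ℝ := (d : ℝ) * (X + ((j - 1 : ℕ) : ℝ) * h) with hK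
  have hXKnn : (0 : ℝ) ≤ X + ((j - 1 : ℕ) : ℝ) * h := by
    have : (0 : ℝ) ≤ ((j - 1 : ℕ) : ℝ) * h := mul_nonneg (Nat.cast_nonneg _) hh.le
    linarith
  have hKpos : (0 : ℝ) < K := by
    have hd' : (0 : ℝ) < (d : ℝ) := by exact_mod_cast hd
    have hX1 : (1 : ℝ) ≤ X := by
      have : (0 : ℝ) ≤ ((j - 1 : ℕ) : ℝ) * (d : ℝ) := by positivity
      linarith
    have : (0 : ℝ) ≤ ((j - 1 : ℕ) : ℝ) * h := mul_nonneg (Nat.cast_nonneg _) hh.le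
    have : (0 : ℝ) < X + ((j - 1 : ℕ) : ℝ) * h := by linarith
    exact mul_pos hd' this
  refine ⟨h / K, div_pos hh hKpos, ?_⟩
  intro V _ _ Γ hCh hdeg A
  set B : Set V := Sum.inl ⁻¹' A with hB
  set M : ℕ := (MixSet Γ j A).ncard with hM
  set bb : ℕ := (vbdry (subdiv Γ j) A).ncard with hbb
  -- nat inequalities
  have n1 : A.ncard ≤ (1 + (j - 1) * d) * B.ncard + (j - 1) * M := count_main hj A hdeg
  have n2 : Aᶜ.ncard ≤ (1 + (j - 1) * d) * Bᶜ.ncard + (j - 1) * M := by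
    have := count_main hj Aᶜ hdeg
    rwa [MixSet_compl, Set.preimage_compl, ← hB, ← hM] at this
  have n3 : (vbdry Γ B).ncard ≤ M := bdry_le_mix hj A
  have n4 : M ≤ d * bb := mix_le_bdry hj hd A hdeg
  have n5 : h * min ((B.ncard : ℝ)) ((Bᶜ.ncard : ℝ)) ≤ ((vbdry Γ B).ncard : ℝ) := by
    have := hCh B; rwa [Nat.cast_min] at this
  -- real versions
  have r1 : (A.ncard : ℝ) ≤ X * (B.ncard : ℝ) + ((j - 1 : ℕ) : ℝ) * M := by
    rw [hX]; push_cast; exact_mod_cast n1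
  have r2 : (Aᶜ.ncard : ℝ) ≤ X * (Bᶜ.ncard : ℝ) + ((j - 1 : ℕ) : ℝ) * M := by
    rw [hX]; push_cast; exact_mod_cast n2
  have rmin : min ((A.ncard : ℝ)) ((Aᶜ.ncard : ℝ)) ≤
      X * min ((B.ncard : ℝ)) ((Bᶜ.ncard : ℝ)) + ((j - 1 : ℕ) : ℝ) * M := by
    rcases le_total (B.ncard : ℝ) ((Bᶜ.ncard : ℝ)) with hbc | hbc
    · rw [min_eq_left hbc]
      exact le_trans (min_le_left _ _) r1
    · rw [min_eq_right hbc]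
      exact le_trans (min_le_right _ _) r2
  have n5' : h * min ((B.ncard : ℝ)) ((Bᶜ.ncard : ℝ)) ≤ (M : ℝ) :=
    le_trans n5 (by exact_mod_cast n3)
  have r4 : (M : ℝ) ≤ (d : ℝ) * (bb : ℝ) := by exact_mod_cast n4
  -- assemble
  rw [Nat.cast_min, div_mul_eq_mul_div, div_le_iff₀ hKpos]
  set mA : ℝ := min ((A.ncard : ℝ)) ((Aᶜ.ncard : ℝ))
  set mB : ℝ := min ((B.ncard : ℝ)) ((Bᶜ.ncard : ℝ))
  calc h * mA ≤ h * (X * mB + ((j - 1 : ℕ) : ℝ) * M) := mul_le_mul_of_nonneg_left rmin hh.le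
    _ = X * (h * mB) + ((j - 1 : ℕ) : ℝ) * h * M := by ring
    _ ≤ X * M + ((j - 1 : ℕ) : ℝ) * h * M := by
        have := mul_le_mul_of_nonneg_left n5' hXnn
        linarith
    _ = (X + ((j - 1 : ℕ) : ℝ) * h) * M := by ring
    _ ≤ (X + ((j - 1 : ℕ) : ℝ) * h) * ((d : ℝ) * bb) := mul_le_mul_of_nonneg_left r4 hXKnn
    _ = (bb : ℝ) * K := by rw [hK]; ring
end

section
/- Let Γ be a finite connected graph with Cheeger constant h(Γ) ≥ h > 0, let B ⊆ V(Γ) be a set of vertices, and for a vertex v ∉ B and radius ρ let B'_ρ(v) denote the set of vertices reachable from v by a path of length less than ρ avoiding all vertices of B. Suppose |B| ≤ (h/2)·|B'_{ρ₀}(v)| for some ρ₀. Then for every integer i ≥ 0, as long as |B'_{ρ₀+i-1}(v)| ≤ |V(Γ)|/2, one has |B'_{ρ₀+i}(v)| ≥ (1 + h/2)^i · |B'_{ρ₀}(v)|. -/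
/-- `B'_ρ(v)`: vertices reachable from `v` by a path of length `< ρ` avoiding `B`. -/
def reachAvoid {V : Type} (Γ : SimpleGraph V) (B : Set V) (v : V) (ρ : ℕ) : Set V :=
  {u | ∃ w : Γ.Walk v u, w.length < ρ ∧ ∀ x ∈ w.support, x ∉ B}

/-!
The ball `A = B'_ρ(v)` grows in one step by its outer boundary minus `B`. As long as
`|A| ≤ |V|/2`, the Cheeger inequality gives `|∂A| ≥ h|A|`, so
`|B'_{ρ+1}(v)| ≥ (1 + h)|A| - |B|`, and since `|B| ≤ (h/2)|B'_{ρ₀}(v)| ≤ (h/2)|A|` for `ρ ≥ ρ₀`,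
each step multiplies the size by at least `1 + h/2`.
-/

section

variable {V : Type} (Γ : SimpleGraph V)

lemma disjoint_vbdry (A : Set V) : Disjoint A (vbdry Γ A) :=
  Set.disjoint_left.2 fun _ hx hx' => hx'.1 hx

lemma CheegerGE.mul_ncard_le_ncard_vbdry [Fintype V] {Γ : SimpleGraph V} {h : ℝ}
    (hch : CheegerGE Γ h) {A : Set V} (hA : 2 * A.ncard ≤ Fintype.card V) :
    h * A.ncard ≤ (vbdry Γ A).ncard := by
  have hcompl : A.ncard + Aᶜ.ncard = Fintype.card V := by
    rw [← Nat.card_eq_fintype_card]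
    exact Set.ncard_add_ncard_compl A
  have hmin : min A.ncard Aᶜ.ncard = A.ncard := min_eq_left (by omega)
  simpa only [hmin] using hch A

variable (B : Set V) (v : V)

lemma reachAvoid_mono : Monotone (reachAvoid Γ B v) :=
  fun _ _ hρ _ ⟨w, hw, hs⟩ => ⟨w, hw.trans_le hρ, hs⟩

lemma vbdry_reachAvoid_diff_subset (ρ : ℕ) :
    vbdry Γ (reachAvoid Γ B v ρ) \ B ⊆ reachAvoid Γ B v (ρ + 1) := by
  rintro x ⟨⟨-, a, ⟨w, hw, hs⟩, hadj⟩, hxB⟩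
  refine ⟨w.concat hadj.symm, by simpa using hw, fun y hy => ?_⟩
  rw [SimpleGraph.Walk.support_concat, List.mem_append, List.mem_singleton] at hy
  rcases hy with hy | rfl
  exacts [hs y hy, hxB]

lemma ncard_reachAvoid_add_ncard_vbdry_diff_le [Finite V] (ρ : ℕ) :
    (reachAvoid Γ B v ρ).ncard + (vbdry Γ (reachAvoid Γ B v ρ) \ B).ncard ≤
      (reachAvoid Γ B v (ρ + 1)).ncard := by
  rw [← Set.ncard_union_eq ((disjoint_vbdry Γ _).mono_right Set.sdiff_subset)]
  exact Set.ncard_le_ncard (Set.union_subset (reachAvoid_mono Γ B v ρ.le_succ)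
    (vbdry_reachAvoid_diff_subset Γ B v ρ))

lemma one_add_mul_ncard_reachAvoid_le [Fintype V] {Γ : SimpleGraph V} {h : ℝ}
    (hch : CheegerGE Γ h) (ρ : ℕ) (hle : 2 * (reachAvoid Γ B v ρ).ncard ≤ Fintype.card V) :
    (1 + h) * (reachAvoid Γ B v ρ).ncard ≤ (reachAvoid Γ B v (ρ + 1)).ncard + B.ncard := by
  have hgrow : ((reachAvoid Γ B v ρ).ncard : ℝ) + (vbdry Γ (reachAvoid Γ B v ρ) \ B).ncard ≤
      (reachAvoid Γ B v (ρ + 1)).ncard := by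
    exact_mod_cast ncard_reachAvoid_add_ncard_vbdry_diff_le Γ B v ρ
  have hdiff : ((vbdry Γ (reachAvoid Γ B v ρ)).ncard : ℝ) ≤
      (vbdry Γ (reachAvoid Γ B v ρ) \ B).ncard + B.ncard := by
    exact_mod_cast Set.ncard_le_ncard_sdiff_add_ncard _ _ (Set.toFinite B)
  linarith [hch.mul_ncard_le_ncard_vbdry hle]

end

theorem stmt_8_general {V : Type} [Fintype V] (Γ : SimpleGraph V) (h : ℝ) (hh : 0 < h)
    (hch : CheegerGE Γ h)
    (B : Set V) (v : V) (ρ₀ : ℕ)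
    (hB : (B.ncard : ℝ) ≤ h / 2 * ((reachAvoid Γ B v ρ₀).ncard : ℝ)) :
    ∀ i : ℕ, 2 * (reachAvoid Γ B v (ρ₀ + i)).ncard ≤ Fintype.card V →
      (1 + h / 2) ^ (i + 1) * ((reachAvoid Γ B v ρ₀).ncard : ℝ) ≤
        ((reachAvoid Γ B v (ρ₀ + i + 1)).ncard : ℝ) := by
  have hmono : ∀ {ρ ρ'}, ρ ≤ ρ' → (reachAvoid Γ B v ρ).ncard ≤ (reachAvoid Γ B v ρ').ncard :=
    fun hρ => Set.ncard_le_ncard (reachAvoid_mono Γ B v hρ)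
  have hstep : ∀ ρ, ρ₀ ≤ ρ → 2 * (reachAvoid Γ B v ρ).ncard ≤ Fintype.card V →
      (1 + h / 2) * (reachAvoid Γ B v ρ).ncard ≤ (reachAvoid Γ B v (ρ + 1)).ncard := by
    intro ρ hρ hle
    have hB_le : (B.ncard : ℝ) ≤ h / 2 * (reachAvoid Γ B v ρ).ncard :=
      hB.trans (mul_le_mul_of_nonneg_left (by exact_mod_cast hmono hρ) (by positivity))
    linarith [one_add_mul_ncard_reachAvoid_le B v hch ρ hle]
  intro i
  induction i with
  | zero => simpa using hstep ρ₀ le_rfl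
  | succ n ih =>
    intro hle
    calc (1 + h / 2) ^ (n + 1 + 1) * ((reachAvoid Γ B v ρ₀).ncard : ℝ)
        = (1 + h / 2) * ((1 + h / 2) ^ (n + 1) * (reachAvoid Γ B v ρ₀).ncard) := by ring
      _ ≤ (1 + h / 2) * (reachAvoid Γ B v (ρ₀ + n + 1)).ncard := by
          gcongr
          exact ih ((Nat.mul_le_mul_left 2 (hmono (by omega))).trans hle)
      _ ≤ _ := hstep _ (by omega) hle

/-- In a finite connected graph with Cheeger constant `≥ h`, a set
`B` of vertices with `|B| ≤ (h/2)|B'_{ρ₀}(v)|`, `v ∉ B`: for every `i ≥ 0`, as long as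
`|B'_{ρ₀+i}(v)| ≤ |V|/2`, one has `|B'_{ρ₀+i+1}(v)| ≥ (1+h/2)^{i+1} |B'_{ρ₀}(v)|`. -/
theorem stmt_8 {V : Type} [Fintype V] (Γ : SimpleGraph V) (h : ℝ) (hh : 0 < h)
    (hΓconn : Γ.Connected) (hch : CheegerGE Γ h)
    (B : Set V) (v : V) (hv : v ∉ B) (ρ₀ : ℕ)
    (hB : (B.ncard : ℝ) ≤ h / 2 * ((reachAvoid Γ B v ρ₀).ncard : ℝ)) :
    ∀ i : ℕ, 2 * (reachAvoid Γ B v (ρ₀ + i)).ncard ≤ Fintype.card V →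
      (1 + h / 2) ^ (i + 1) * ((reachAvoid Γ B v ρ₀).ncard : ℝ) ≤
        ((reachAvoid Γ B v (ρ₀ + i + 1)).ncard : ℝ) :=
  stmt_8_general Γ h hh hch B v ρ₀ hB
end

section
/- Let Γ be a d-regular graph with d ≥ 3 and girth g, let j ≥ 1 be an integer, and consider the j-subdivision Γ^{(j)} with girth j·g. Let m be a vertex of Γ^{(j)} and 0 < λ ≤ 1/4. Then the ball of radius λ·j·g around m in Γ^{(j)} has at most C·j·(d−1)^{g/4} vertices, where C is a constant depending only on d. -/
/-!
A walk of length `n` in the subdivision `Γ^{(j)}` that starts near an original vertex `a`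
shadows a walk of `Γ` of length about `n / j` from `a`, so the ball of radius `λ j g ≤ j g / 4`
around `m` is covered by the stars (a vertex together with the interior vertices of its edges)
of the vertices of a ball of radius `g / 4 + 2` in `Γ`. A ball of radius `r` in a graph of
maximal degree `d ≥ 3` has at most `3 (d - 1) ^ r` vertices (each sphere has at most `d - 1`
times as many vertices as the previous one), and each star has at most `2 d j` vertices.
-/

lemma Set.ncard_le_ncard_mul_of_subset_biUnion {α ι : Type*} [Finite α] {s : Set α}
    {t : Set ι} (ht : t.Finite) (f : ι → Set α) (hs : s ⊆ ⋃ i ∈ t, f i) {k : ℕ}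
    (hf : ∀ i ∈ t, (f i).ncard ≤ k) : s.ncard ≤ t.ncard * k :=
  calc s.ncard ≤ (⋃ i ∈ ht.toFinset, f i).ncard := Set.ncard_le_ncard (by simpa using hs)
    _ ≤ ∑ i ∈ ht.toFinset, (f i).ncard := ht.toFinset.set_ncard_biUnion_le f
    _ ≤ ht.toFinset.card • k := Finset.sum_le_card_nsmul _ _ _ (by simpa using hf)
    _ = t.ncard * k := by rw [smul_eq_mul, Set.ncard_eq_toFinset_card t ht]

namespace SimpleGraph

variable {W : Type*} {G : SimpleGraph W} {c v : W} {n : ℕ}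

def closedBall (G : SimpleGraph W) (c : W) (n : ℕ) : Set W :=
  {v | ∃ p : G.Walk c v, p.length ≤ n}

lemma closedBall_mono {n n' : ℕ} (h : n ≤ n') : G.closedBall c n ⊆ G.closedBall c n' :=
  fun _ ⟨p, hp⟩ => ⟨p, hp.trans h⟩

lemma mem_closedBall_self (c : W) (n : ℕ) : c ∈ G.closedBall c n :=
  ⟨.nil, Nat.zero_le n⟩

lemma closedBall_zero (c : W) : G.closedBall c 0 = {c} := by
  ext v
  refine ⟨fun ⟨p, hp⟩ => (Walk.eq_of_length_eq_zero (Nat.le_zero.mp hp)).symm, ?_⟩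
  rintro rfl
  exact mem_closedBall_self v 0

lemma mem_closedBall_succ_iff :
    v ∈ G.closedBall c (n + 1) ↔ v = c ∨ ∃ u ∈ G.closedBall c n, G.Adj u v := by
  constructor
  · rintro ⟨p, hp⟩
    induction p using Walk.concatRec with
    | Hnil => exact .inl rfl
    | Hconcat p h => exact .inr ⟨_, ⟨p, by simpa using hp⟩, h⟩
  · rintro (rfl | ⟨u, ⟨p, hp⟩, h⟩)
    · exact mem_closedBall_self _ _
    · exact ⟨p.concat h, by simpa using hp⟩

lemma exists_adj_of_mem_closedBall_succ_diff
    (hv : v ∈ G.closedBall c (n + 1) \ G.closedBall c n) :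
    ∃ u ∈ G.closedBall c n, G.Adj u v := by
  rcases mem_closedBall_succ_iff.mp hv.1 with rfl | h
  · exact absurd (mem_closedBall_self v n) hv.2
  · exact h

lemma closedBall_one_diff_zero_subset (c : W) :
    G.closedBall c 1 \ G.closedBall c 0 ⊆ G.neighborSet c := by
  intro v hv
  obtain ⟨u, hu, huv⟩ := exists_adj_of_mem_closedBall_succ_diff hv
  rw [closedBall_zero, Set.mem_singleton_iff] at hu
  exact hu ▸ huv

section BoundedDegree

variable [Finite W] {d : ℕ}

lemma ncard_closedBall_succ_succ_diff_le (hdeg : ∀ v, (G.neighborSet v).ncard ≤ d)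
    (c : W) (n : ℕ) :
    (G.closedBall c (n + 2) \ G.closedBall c (n + 1)).ncard ≤
      (G.closedBall c (n + 1) \ G.closedBall c n).ncard * (d - 1) := by
  refine Set.ncard_le_ncard_mul_of_subset_biUnion (Set.toFinite _)
    (fun u => G.neighborSet u \ G.closedBall c (n + 1)) (fun v hv => ?_) (fun u hu => ?_)
  · obtain ⟨u, hu, huv⟩ := exists_adj_of_mem_closedBall_succ_diff hv
    have hun : u ∉ G.closedBall c n :=
      fun ⟨p, hp⟩ => hv.2 ⟨p.concat huv, by simpa using hp⟩
    exact Set.mem_biUnion ⟨hu, hun⟩ ⟨huv, hv.2⟩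
  · -- `u` has a neighbour `w` in the inner ball, which is not counted
    obtain ⟨w, hw, hwu⟩ := exists_adj_of_mem_closedBall_succ_diff hu
    calc (G.neighborSet u \ G.closedBall c (n + 1)).ncard
        ≤ (G.neighborSet u \ {w}).ncard := Set.ncard_le_ncard (Set.sdiff_subset_sdiff_right
          (Set.singleton_subset_iff.mpr (closedBall_mono n.le_succ hw)))
      _ = (G.neighborSet u).ncard - 1 := Set.ncard_sdiff_singleton_of_mem hwu.symm
      _ ≤ d - 1 := Nat.sub_le_sub_right (hdeg u) 1

lemma ncard_closedBall_succ_diff_le (hdeg : ∀ v, (G.neighborSet v).ncard ≤ d)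
    (c : W) (n : ℕ) :
    (G.closedBall c (n + 1) \ G.closedBall c n).ncard ≤ d * (d - 1) ^ n := by
  induction n with
  | zero =>
    simpa using (Set.ncard_le_ncard (closedBall_one_diff_zero_subset c)).trans (hdeg c)
  | succ n ih =>
    calc _ ≤ (G.closedBall c (n + 1) \ G.closedBall c n).ncard * (d - 1) :=
          ncard_closedBall_succ_succ_diff_le hdeg c n
      _ ≤ d * (d - 1) ^ n * (d - 1) := Nat.mul_le_mul_right _ ih
      _ = d * (d - 1) ^ (n + 1) := by ring

lemma ncard_closedBall_le (hd : 3 ≤ d) (hdeg : ∀ v, (G.neighborSet v).ncard ≤ d)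
    (c : W) (r : ℕ) :
    (G.closedBall c r).ncard ≤ 3 * (d - 1) ^ r := by
  induction r with
  | zero => simp [closedBall_zero]
  | succ r ih =>
    have hd' : d + 3 ≤ 3 * (d - 1) := by omega
    calc (G.closedBall c (r + 1)).ncard
        = (G.closedBall c (r + 1) \ G.closedBall c r).ncard + (G.closedBall c r).ncard :=
          (Set.ncard_sdiff_add_ncard_of_subset (closedBall_mono r.le_succ)).symm
      _ ≤ d * (d - 1) ^ r + 3 * (d - 1) ^ r :=
          Nat.add_le_add (ncard_closedBall_succ_diff_le hdeg c r) ih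
      _ = (d + 3) * (d - 1) ^ r := by ring
      _ ≤ 3 * (d - 1) * (d - 1) ^ r := Nat.mul_le_mul_right _ hd'
      _ = 3 * (d - 1) ^ (r + 1) := by ring

end BoundedDegree

end SimpleGraph

section Subdivision

open SimpleGraph

variable {V : Type} [LinearOrder V] {Γ : SimpleGraph V} {j : ℕ}

instance [Finite V] : Finite (SubIdx Γ j) := by
  unfold SubIdx; infer_instance

lemma subdiv_adj_inl_inl {a b : V} (h : (subdiv Γ j).Adj (.inl a) (.inl b)) :
    j = 1 ∧ Γ.Adj a b := by
  rw [subdiv, fromRel_adj] at h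
  obtain ⟨-, h | h⟩ := h
  · exact h
  · exact ⟨h.1, h.2.symm⟩

lemma subdiv_adj_inl_inr {a x y : V} {i : Fin (j - 1)} {hq : x < y ∧ Γ.Adj x y}
    (h : (subdiv Γ j).Adj (.inl a) (.inr ⟨(x, y, i), hq⟩)) :
    (a = x ∧ (i : ℕ) = 0) ∨ (a = y ∧ (i : ℕ) + 2 = j) := by
  rw [subdiv, fromRel_adj] at h
  obtain ⟨-, h | h⟩ := h
  · exact h
  · exact h.elim

lemma subdiv_adj_inr_inr {x y x' y' : V} {i i' : Fin (j - 1)}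
    {hq : x < y ∧ Γ.Adj x y} {hq' : x' < y' ∧ Γ.Adj x' y'}
    (h : (subdiv Γ j).Adj (.inr ⟨(x, y, i), hq⟩) (.inr ⟨(x', y', i'), hq'⟩)) :
    x = x' ∧ y = y' ∧ ((i : ℕ) + 1 = i' ∨ (i' : ℕ) + 1 = i) := by
  rw [subdiv, fromRel_adj] at h
  obtain ⟨-, h | h⟩ := h
  · exact ⟨h.1, h.2.1, .inl h.2.2⟩
  · exact ⟨h.1.symm, h.2.1.symm, .inr h.2.2⟩

variable (Γ j) in
def subdivAnchor : V ⊕ SubIdx Γ j → V :=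
  Sum.elim id fun q => q.1.1

/-- The interior vertex `(x, y, i)` lies at distance `i + 1` from `x` and `j - 1 - i` from `y`;
the slack `j` in the bound absorbs the distance from the centre of a ball to its anchor. -/
def SubdivWithin (Γ : SimpleGraph V) (j : ℕ) (a : V) : V ⊕ SubIdx Γ j → ℕ → Prop
  | .inl b, n => ∃ p : Γ.Walk a b, j * p.length ≤ n + j
  | .inr ⟨(x, y, i), _⟩, n =>
      (∃ p : Γ.Walk a x, j * p.length + (i + 1) ≤ n + j) ∨
      (∃ p : Γ.Walk a y, j * p.length + (j - 1 - i) ≤ n + j)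

lemma SubdivWithin.mono {a : V} {z : V ⊕ SubIdx Γ j} {n n' : ℕ} (h : n ≤ n')
    (hz : SubdivWithin Γ j a z n) : SubdivWithin Γ j a z n' := by
  rcases z with b | ⟨⟨x, y, i⟩, hq⟩
  · obtain ⟨p, hp⟩ := hz
    exact ⟨p, by omega⟩
  · rcases hz with ⟨p, hp⟩ | ⟨p, hp⟩
    · exact .inl ⟨p, by omega⟩
    · exact .inr ⟨p, by omega⟩

lemma SubdivWithin.of_adj {a : V} {z z' : V ⊕ SubIdx Γ j} {n : ℕ}
    (hz : SubdivWithin Γ j a z n) (hadj : (subdiv Γ j).Adj z z') :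
    SubdivWithin Γ j a z' (n + 1) := by
  rcases z with b | ⟨⟨x, y, i⟩, hxy, hΓ⟩ <;>
    rcases z' with b' | ⟨⟨x', y', i'⟩, hq'⟩
  · obtain ⟨hj, hbb'⟩ := subdiv_adj_inl_inl hadj
    obtain ⟨p, hp⟩ := hz
    exact ⟨p.concat hbb', by rw [Walk.length_concat]; subst hj; omega⟩
  · obtain ⟨p, hp⟩ := hz
    rcases subdiv_adj_inl_inr hadj with ⟨rfl, hi⟩ | ⟨rfl, hi⟩
    · exact .inl ⟨p, by omega⟩
    · exact .inr ⟨p, by omega⟩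
  · have hi := i.isLt
    rcases subdiv_adj_inl_inr hadj.symm with ⟨rfl, hi⟩ | ⟨rfl, hi⟩ <;>
      rcases hz with ⟨p, hp⟩ | ⟨p, hp⟩
    · exact ⟨p, by omega⟩
    · exact ⟨p.concat hΓ.symm, by rw [Walk.length_concat, Nat.mul_succ]; omega⟩
    · exact ⟨p.concat hΓ, by rw [Walk.length_concat, Nat.mul_succ]; omega⟩
    · exact ⟨p, by omega⟩
  · have hi := i.isLt
    have hi' := i'.isLt
    obtain ⟨rfl, rfl, hii'⟩ := subdiv_adj_inr_inr hadj
    rcases hz with ⟨p, hp⟩ | ⟨p, hp⟩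
    · exact .inl ⟨p, by omega⟩
    · exact .inr ⟨p, by omega⟩

lemma subdivWithin_of_walk {m z : V ⊕ SubIdx Γ j} (p : (subdiv Γ j).Walk m z) :
    SubdivWithin Γ j (subdivAnchor Γ j m) z p.length := by
  induction p using Walk.concatRec with
  | @Hnil m =>
    rcases m with a | ⟨⟨x, y, i⟩, hq⟩
    · exact ⟨Walk.nil, by change j * 0 ≤ 0 + j; omega⟩
    · exact .inl ⟨Walk.nil, by change j * 0 + (i + 1) ≤ 0 + j; omega⟩
  | Hconcat p h ih => simpa using ih.of_adj h

variable (Γ j) in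
def subdivStar (b : V) : Set (V ⊕ SubIdx Γ j) :=
  insert (.inl b) (Sum.inr '' {q | q.1.1 = b ∨ q.1.2.1 = b})

lemma SubdivWithin.exists_mem_subdivStar {a : V} {z : V ⊕ SubIdx Γ j} {n : ℕ}
    (hz : SubdivWithin Γ j a z n) :
    ∃ b, z ∈ subdivStar Γ j b ∧ ∃ p : Γ.Walk a b, j * p.length ≤ n + j := by
  rcases z with b | q
  · exact ⟨b, Set.mem_insert _ _, hz⟩
  · obtain ⟨⟨x, y, i⟩, hq⟩ := q
    rcases hz with ⟨p, hp⟩ | ⟨p, hp⟩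
    · exact ⟨x, .inr ⟨_, .inl rfl, rfl⟩, p, by omega⟩
    · exact ⟨y, .inr ⟨_, .inr rfl, rfl⟩, p, by omega⟩

lemma closedBall_subdiv_subset {n r : ℕ} (hj : 0 < j) (hr : n + j ≤ j * r)
    (m : V ⊕ SubIdx Γ j) :
    (subdiv Γ j).closedBall m n ⊆
      ⋃ b ∈ Γ.closedBall (subdivAnchor Γ j m) r, subdivStar Γ j b := by
  rintro z ⟨p, hp⟩
  obtain ⟨b, hz, q, hq⟩ := ((subdivWithin_of_walk p).mono hp).exists_mem_subdivStar
  exact Set.mem_biUnion ⟨q, Nat.le_of_mul_le_mul_left (hq.trans hr) hj⟩ hz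

section BoundedDegree

variable [Finite V] {d : ℕ}

lemma ncard_setOf_subIdx_fst_eq_le (hdeg : ∀ v, (Γ.neighborSet v).ncard ≤ d) (b : V) :
    {q : SubIdx Γ j | q.1.1 = b}.ncard ≤ d * (j - 1) := by
  calc {q : SubIdx Γ j | q.1.1 = b}.ncard
      ≤ (Γ.neighborSet b ×ˢ (Set.univ : Set (Fin (j - 1)))).ncard := by
        refine Set.ncard_le_ncard_of_injOn (fun q => (q.1.2.1, q.1.2.2)) ?_ ?_
        · rintro ⟨⟨x, y, i⟩, -, hΓ⟩ rfl
          exact ⟨hΓ, Set.mem_univ i⟩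
        · rintro ⟨⟨x, y, i⟩, hq⟩ hb ⟨⟨x', y', i'⟩, hq'⟩ hb' h
          obtain ⟨rfl, rfl⟩ := Prod.mk.inj h
          obtain rfl : _ = _ := hb.trans hb'.symm
          rfl
    _ ≤ d * (j - 1) := by simpa [Set.ncard_prod] using Nat.mul_le_mul_right _ (hdeg b)

lemma ncard_setOf_subIdx_snd_eq_le (hdeg : ∀ v, (Γ.neighborSet v).ncard ≤ d) (b : V) :
    {q : SubIdx Γ j | q.1.2.1 = b}.ncard ≤ d * (j - 1) := by
  calc {q : SubIdx Γ j | q.1.2.1 = b}.ncard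
      ≤ (Γ.neighborSet b ×ˢ (Set.univ : Set (Fin (j - 1)))).ncard := by
        refine Set.ncard_le_ncard_of_injOn (fun q => (q.1.1, q.1.2.2)) ?_ ?_
        · rintro ⟨⟨x, y, i⟩, -, hΓ⟩ rfl
          exact ⟨hΓ.symm, Set.mem_univ i⟩
        · rintro ⟨⟨x, y, i⟩, hq⟩ hb ⟨⟨x', y', i'⟩, hq'⟩ hb' h
          obtain ⟨rfl, rfl⟩ := Prod.mk.inj h
          obtain rfl : _ = _ := hb.trans hb'.symm
          rfl
    _ ≤ d * (j - 1) := by simpa [Set.ncard_prod] using Nat.mul_le_mul_right _ (hdeg b)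

lemma ncard_subdivStar_le (hdeg : ∀ v, (Γ.neighborSet v).ncard ≤ d) (b : V) :
    (subdivStar Γ j b).ncard ≤ 1 + 2 * (d * (j - 1)) :=
  calc (subdivStar Γ j b).ncard
      ≤ (Sum.inr '' {q : SubIdx Γ j | q.1.1 = b ∨ q.1.2.1 = b}).ncard + 1 :=
        Set.ncard_insert_le _ _
    _ ≤ {q : SubIdx Γ j | q.1.1 = b ∨ q.1.2.1 = b}.ncard + 1 :=
        Nat.add_le_add_right Set.ncard_image_le 1
    _ ≤ {q : SubIdx Γ j | q.1.1 = b}.ncard + {q : SubIdx Γ j | q.1.2.1 = b}.ncard + 1 :=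
        Nat.add_le_add_right (Set.ofPred_or ▸ Set.ncard_union_le _ _) 1
    _ ≤ 1 + 2 * (d * (j - 1)) := by
        have := ncard_setOf_subIdx_fst_eq_le (j := j) hdeg b
        have := ncard_setOf_subIdx_snd_eq_le (j := j) hdeg b
        omega

lemma ncard_closedBall_subdiv_le (hd : 3 ≤ d) (hdeg : ∀ v, (Γ.neighborSet v).ncard ≤ d)
    {n r : ℕ} (hj : 0 < j) (hr : n + j ≤ j * r) (m : V ⊕ SubIdx Γ j) :
    ((subdiv Γ j).closedBall m n).ncard ≤ 3 * (d - 1) ^ r * (2 * d * j) :=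
  calc ((subdiv Γ j).closedBall m n).ncard
      ≤ (Γ.closedBall (subdivAnchor Γ j m) r).ncard * (1 + 2 * (d * (j - 1))) :=
        Set.ncard_le_ncard_mul_of_subset_biUnion (Set.toFinite _) _
          (closedBall_subdiv_subset hj hr m) fun b _ => ncard_subdivStar_le hdeg b
    _ ≤ 3 * (d - 1) ^ r * (2 * d * j) := by
        refine Nat.mul_le_mul (ncard_closedBall_le hd hdeg _ r) ?_
        obtain ⟨k, rfl⟩ : ∃ k, j = k + 1 := ⟨j - 1, by omega⟩
        simp only [Nat.add_sub_cancel]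
        nlinarith

end BoundedDegree

end Subdivision

/-- For a `d`-regular graph (`d ≥ 3`) of girth `g` and `j ≥ 1`,
`0 < λ ≤ 1/4`, the ball of radius `λ·j·g` around any vertex `m` of the `j`-subdivision
has at most `C·j·(d-1)^{g/4}` vertices, with `C` depending only on `d`. -/
theorem stmt_10 (d : ℕ) (hd : 3 ≤ d) :
    ∃ C : ℝ, 0 < C ∧
      ∀ (V : Type) [Fintype V] [LinearOrder V] (Γ : SimpleGraph V) (g j : ℕ),
        1 ≤ j → 0 < g → Γ.girth = g → (∀ v : V, (Γ.neighborSet v).ncard = d) →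
        ∀ (m : V ⊕ SubIdx Γ j) (lam : ℝ), 0 < lam → lam ≤ 1 / 4 →
          (({x | ∃ p : (subdiv Γ j).Walk m x, (p.length : ℝ) ≤ lam * (j * g)}).ncard : ℝ)
            ≤ C * j * ((d : ℝ) - 1) ^ ((g : ℝ) / 4) := by
  have hd1 : (1 : ℝ) ≤ (d : ℝ) - 1 := by
    have : (3 : ℝ) ≤ d := by exact_mod_cast hd
    linarith
  refine ⟨6 * d * ((d : ℝ) - 1) ^ 2, by positivity, ?_⟩
  intro V _ _ Γ g j hj _ _ hreg m lam _ hlam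
  have hball : {x | ∃ p : (subdiv Γ j).Walk m x, (p.length : ℝ) ≤ lam * (j * g)} ⊆
      (subdiv Γ j).closedBall m (j * g / 4) := by
    rintro z ⟨p, hp⟩
    refine ⟨p, (Nat.le_div_iff_mul_le (by norm_num)).mpr ?_⟩
    have : (p.length : ℝ) * 4 ≤ j * g := by nlinarith [(by positivity : (0 : ℝ) ≤ j * g)]
    exact_mod_cast this
  have hr : j * g / 4 + j ≤ j * (g / 4 + 2) := by
    have hg : g ≤ 4 * (g / 4 + 1) := by omega
    have : j * g / 4 ≤ j * (g / 4 + 1) := Nat.div_le_of_le_mul (by nlinarith)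
    nlinarith
  have hcount := ncard_closedBall_subdiv_le hd (fun v => (hreg v).le) hj hr m
  have hexp : ((d : ℝ) - 1) ^ (g / 4) ≤ ((d : ℝ) - 1) ^ ((g : ℝ) / 4) := by
    rw [← Real.rpow_natCast]
    refine Real.rpow_le_rpow_of_exponent_le hd1 ?_
    rw [le_div_iff₀ (by norm_num)]
    exact_mod_cast Nat.div_mul_le_self g 4
  calc (({x | ∃ p : (subdiv Γ j).Walk m x, (p.length : ℝ) ≤ lam * (j * g)}).ncard : ℝ)
      ≤ (3 * (d - 1) ^ (g / 4 + 2) * (2 * d * j) : ℕ) := by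
        exact_mod_cast (Set.ncard_le_ncard hball).trans hcount
    _ = 6 * d * ((d : ℝ) - 1) ^ 2 * j * ((d : ℝ) - 1) ^ (g / 4) := by
        push_cast [Nat.cast_sub (by omega : 1 ≤ d)]
        ring
    _ ≤ 6 * d * ((d : ℝ) - 1) ^ 2 * j * ((d : ℝ) - 1) ^ ((g : ℝ) / 4) := by
        gcongr
end
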